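/- arXiv:1911.11350 — 2 statements merged into one kernel-verified Lean document; each statement's English description precedes it below -/
import Mathlib

section
/- Let B be an N×N integer matrix that is strictly upper triangular and satisfies B * B = 0. For 0 ≤ m < n ≤ N let B_{(m,n]} denote the square submatrix of B with rows and columns indexed by {m+1, …, n}; then B_{(m,n]} * B_{(m,n]} = 0, and its homology is the ℤ-module ker(B_{(m,n]}) ⧸ range(B_{(m,n]}), where B_{(m,n]} is regarded as a ℤ-linear endomorphism of ℤ^{n−m}. Suppose that for all 0 ≤ m < n ≤ N this homology ℤ-module is free. Then the support of the partial-matching form of B is independent of the coefficient field: for any two fields 𝕜₁ and 𝕜₂, if U₁ is an invertible upper triangular matrix over 𝕜₁ such that C₁ = U₁⁻¹ * B₁ * U₁ is strictly upper triangular and in partial-matching form (where B₁ is B with entries mapped into 𝕜₁ via ℤ → 𝕜₁), and likewise U₂, C₂, B₂ over 𝕜₂, then {(i, j) : C₁ i j ≠ 0} = {(i, j) : C₂ i j ≠ 0}. (This is the chain-level matrix form of the paper's Theorem 1 and Corollary 3: if all relative homology groups H(X_n, X_m; ℤ) of the filtration are free, the persistence diagram does not depend on the choice of coefficient field.) -/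
/-- A matrix is strictly upper triangular if `C i j = 0` whenever `i ≥ j`. -/
def IsStrictlyUpperTriangular {α : Type*} [Zero α] {N : ℕ}
    (C : Matrix (Fin N) (Fin N) α) : Prop :=
  ∀ i j, j ≤ i → C i j = 0

/-- A matrix is upper triangular if `U i j = 0` whenever `i > j`. -/
def IsUpperTriangularMat {α : Type*} [Zero α] {N : ℕ}
    (U : Matrix (Fin N) (Fin N) α) : Prop :=
  ∀ i j, j < i → U i j = 0

/-- A matrix is in partial-matching form if every entry is `0` or `1` and each row and
each column contains at most one nonzero entry. -/
def IsPartialMatching {α : Type*} [Zero α] [One α] {N : ℕ}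
    (C : Matrix (Fin N) (Fin N) α) : Prop :=
  (∀ i j, C i j = 0 ∨ C i j = 1) ∧
  (∀ i j₁ j₂, C i j₁ ≠ 0 → C i j₂ ≠ 0 → j₁ = j₂) ∧
  (∀ i₁ i₂ j, C i₁ j ≠ 0 → C i₂ j ≠ 0 → i₁ = i₂)

/-- The square submatrix `B_{(m,n]}` of `B` with rows and columns indexed by
`{m+1, …, n}` (in `0`-based indexing, rows and columns `m, …, n-1`). -/
def intervalSubmatrix {N : ℕ} (B : Matrix (Fin N) (Fin N) ℤ) (m n : ℕ) (hn : n ≤ N) :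
    Matrix (Fin (n - m)) (Fin (n - m)) ℤ :=
  fun i j => B ⟨m + i.1, by have := i.2; omega⟩ ⟨m + j.1, by have := j.2; omega⟩

/-- The homology `ker T ⧸ range T` of a square integer matrix `T`, regarded as a
`ℤ`-linear endomorphism of `ℤ^k`. -/
abbrev matrixHomology {k : ℕ} (T : Matrix (Fin k) (Fin k) ℤ) : Type :=
  LinearMap.ker T.mulVecLin ⧸
    (LinearMap.range T.mulVecLin).comap (LinearMap.ker T.mulVecLin).subtype

/-! ### Auxiliary material -/

open Matrix Finset Module

noncomputable section FieldIndependence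

private lemma rank_eq_card_of_mul_eq_one {m n : Type*} [Fintype m] [Fintype n] [DecidableEq m]
    {K : Type*} [Field K] (A : Matrix m n K) (S : Matrix n m K) (h : A * S = 1) :
    A.rank = Fintype.card m := by
  refine le_antisymm A.rank_le_card_height ?_
  calc Fintype.card m = (1 : Matrix m m K).rank := (Matrix.rank_one).symm
  _ = (A * S).rank := by rw [h]
  _ ≤ A.rank := Matrix.rank_mul_le_left _ _

private lemma rank_fromRows_zero {m₁ m₂ n : Type*} [Fintype m₁] [Fintype m₂] [Fintype n]
    [DecidableEq m₁] {K : Type*} [Field K] (A : Matrix m₁ n K) :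
    (Matrix.fromRows A (0 : Matrix m₂ n K)).rank = A.rank := by
  refine le_antisymm ?_ ?_
  · have h1 : Matrix.fromRows A (0 : Matrix m₂ n K) =
        Matrix.fromRows (1 : Matrix m₁ m₁ K) (0 : Matrix m₂ m₁ K) * A := by
      rw [Matrix.fromRows_mul, Matrix.one_mul, Matrix.zero_mul]
    rw [h1]; exact Matrix.rank_mul_le_right _ _
  · have h2 : A = Matrix.fromCols (1 : Matrix m₁ m₁ K) (0 : Matrix m₁ m₂ K) *
        Matrix.fromRows A (0 : Matrix m₂ n K) := by
      rw [Matrix.fromCols_mul_fromRows, Matrix.one_mul, Matrix.mul_zero, add_zero]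
    conv_lhs => rw [h2]
    exact Matrix.rank_mul_le_right _ _

/-- If `P' * P = 1` then multiplying on the left by `P` does not change rank. -/
private lemma rank_mul_eq_of_inv {m m' n : Type*} [Fintype m] [Fintype m'] [Fintype n]
    [DecidableEq m'] {K : Type*} [Field K] (P : Matrix m m' K) (P' : Matrix m' m K)
    (h' : P' * P = 1) (X : Matrix m' n K) : (P * X).rank = X.rank := by
  refine le_antisymm (Matrix.rank_mul_le_right _ _) ?_
  have h2 : X = P' * (P * X) := by rw [← Matrix.mul_assoc, h', Matrix.one_mul]
  conv_lhs => rw [h2]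
  exact Matrix.rank_mul_le_right _ _

private lemma rank_mul_eq_of_inv_right {m m' n : Type*} [Fintype m] [Fintype m'] [Fintype n]
    [DecidableEq m'] {K : Type*} [Field K] (Q : Matrix m' m K) (Q' : Matrix m m' K)
    (h' : Q * Q' = 1) (X : Matrix n m' K) : (X * Q).rank = X.rank := by
  refine le_antisymm (Matrix.rank_mul_le_left _ _) ?_
  have h2 : X = (X * Q) * Q' := by rw [Matrix.mul_assoc, h', Matrix.mul_one]
  conv_lhs => rw [h2]
  exact Matrix.rank_mul_le_left _ _

/-- If the cokernel of an integer matrix is a free `ℤ`-module, then its rank over every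
field is the same. -/
theorem exists_rank_forall_field {k : ℕ} (T : Matrix (Fin k) (Fin k) ℤ)
    (hc : Module.Free ℤ ((Fin k → ℤ) ⧸ LinearMap.range T.mulVecLin)) :
    ∃ r : ℕ, ∀ (K : Type) (_ : Field K), (T.map (Int.cast : ℤ → K)).rank = r := by
  classical
  set R : Submodule ℤ (Fin k → ℤ) := LinearMap.range T.mulVecLin with hRdef
  haveI : Module.Free ℤ ((Fin k → ℤ) ⧸ R) := hc
  set r : ℕ := Module.finrank ℤ R with hrdef
  let bR : Basis (Fin r) ℤ R := Module.finBasis ℤ R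
  set c : ℕ := Module.finrank ℤ ((Fin k → ℤ) ⧸ R) with hcdef
  let bC : Basis (Fin c) ℤ ((Fin k → ℤ) ⧸ R) := Module.finBasis ℤ _
  obtain ⟨σ, hσ⟩ := Module.projective_lifting_property R.mkQ
    (LinearMap.id : ((Fin k → ℤ) ⧸ R) →ₗ[ℤ] _) R.mkQ_surjective
  have hmk : ∀ z, R.mkQ (σ z) = z := fun z => LinearMap.congr_fun hσ z
  -- the splitting equivalence
  set φ : (R × ((Fin k → ℤ) ⧸ R)) →ₗ[ℤ] (Fin k → ℤ) := R.subtype.coprod σ with hφdef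
  have hφapp : ∀ x y, φ (x, y) = (x : Fin k → ℤ) + σ y := fun x y => rfl
  have hφinj : Function.Injective φ := by
    rw [injective_iff_map_eq_zero]
    rintro ⟨x, y⟩ h
    have h0 : (x : Fin k → ℤ) + σ y = 0 := h
    have h1 : R.mkQ ((x : Fin k → ℤ) + σ y) = 0 := by rw [h0, map_zero]
    have hx0 : R.mkQ (x : Fin k → ℤ) = 0 := by
      rw [Submodule.mkQ_apply, Submodule.Quotient.mk_eq_zero]; exact x.2
    rw [map_add, hx0, zero_add, hmk] at h1
    have hx : (x : Fin k → ℤ) = 0 := by rw [h1, map_zero, add_zero] at h0; exact h0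
    rw [Prod.mk_eq_zero]
    exact ⟨Subtype.ext hx, h1⟩
  have hφsurj : Function.Surjective φ := by
    intro v
    have h0 : R.mkQ (v - σ (R.mkQ v)) = 0 := by rw [map_sub, hmk, sub_self]
    have hvmem : v - σ (R.mkQ v) ∈ R :=
      (Submodule.Quotient.mk_eq_zero R).mp (by rw [← Submodule.mkQ_apply]; exact h0)
    exact ⟨(⟨v - σ (R.mkQ v), hvmem⟩, R.mkQ v), by rw [hφapp]; exact sub_add_cancel _ _⟩
  let e : (R × ((Fin k → ℤ) ⧸ R)) ≃ₗ[ℤ] (Fin k → ℤ) := LinearEquiv.ofBijective φ ⟨hφinj, hφsurj⟩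
  let b : Basis (Fin r ⊕ Fin c) ℤ (Fin k → ℤ) := (bR.prod bC).map e
  have hbinl : ∀ i, b (Sum.inl i) = (bR i : Fin k → ℤ) := by
    intro i
    show e ((bR.prod bC) (Sum.inl i)) = _
    rw [Basis.prod_apply]
    show φ (bR i, (0 : (Fin k → ℤ) ⧸ R)) = _
    rw [hφapp, map_zero, add_zero]
  -- columns of T as elements of R
  let colT : Fin k → R := fun j => ⟨T.mulVecLin (Pi.single j 1), LinearMap.mem_range_self _ _⟩
  have hcolT : ∀ j x, (colT j : Fin k → ℤ) x = T x j := by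
    intro j x
    show (T *ᵥ Pi.single j 1) x = T x j
    rw [Matrix.mulVec_single]
    exact mul_one _
  let A : Matrix (Fin r) (Fin k) ℤ := Matrix.of fun i j => bR.repr (colT j) i
  -- change of basis matrices
  let pib : Basis (Fin k) ℤ (Fin k → ℤ) := Pi.basisFun ℤ (Fin k)
  let P : Matrix (Fin k) (Fin r ⊕ Fin c) ℤ := pib.toMatrix ⇑b
  let P' : Matrix (Fin r ⊕ Fin c) (Fin k) ℤ := b.toMatrix ⇑pib
  have hPP' : P * P' = 1 := Basis.toMatrix_mul_toMatrix_flip pib b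
  have hP'P : P' * P = 1 := Basis.toMatrix_mul_toMatrix_flip b pib
  -- the key factorization
  have hT : T = P * Matrix.fromRows A (0 : Matrix (Fin c) (Fin k) ℤ) := by
    ext x j
    rw [Matrix.mul_apply, Fintype.sum_sum_type]
    have hP : ∀ u, P x u = b u x := by
      intro u
      show pib.toMatrix (⇑b) x u = b u x
      rw [Basis.toMatrix_apply]
      exact Pi.basisFun_repr ℤ (Fin k) (b u) x
    simp only [hP, Matrix.fromRows_apply_inl, Matrix.fromRows_apply_inr, Matrix.zero_apply,
      mul_zero, Finset.sum_const_zero, add_zero]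
    have hsum : (colT j : Fin k → ℤ) = ∑ i, bR.repr (colT j) i • (bR i : Fin k → ℤ) := by
      conv_lhs => rw [← bR.sum_repr (colT j)]
      rw [Submodule.coe_sum]
      simp only [SetLike.val_smul]
    have := congrFun hsum x
    rw [hcolT] at this
    rw [this, Finset.sum_apply]
    refine Finset.sum_congr rfl fun i _ => ?_
    rw [hbinl, Pi.smul_apply, smul_eq_mul, mul_comm]
    rfl
  -- A is surjective over ℤ, hence has a right inverse
  have hAmul : ∀ (v : Fin k → ℤ) (hv : T.mulVecLin v ∈ R) (i : Fin r),
      A.mulVecLin v i = bR.repr ⟨T.mulVecLin v, hv⟩ i := by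
    intro v hv i
    have hdecomp : (⟨T.mulVecLin v, hv⟩ : R) = ∑ j, v j • colT j := by
      apply Subtype.ext
      rw [Submodule.coe_sum]
      simp only [SetLike.val_smul]
      show T.mulVecLin v = _
      have : v = ∑ j, v j • Pi.single j (1 : ℤ) := by
        ext x
        rw [Finset.sum_apply]
        simp [Pi.single_apply, Finset.sum_ite_eq']
      conv_lhs => rw [this]
      rw [map_sum]
      refine Finset.sum_congr rfl fun j _ => ?_
      rw [_root_.map_smul]
    rw [hdecomp, map_sum]
    rw [Finsupp.finset_sum_apply]
    show A.mulVec v i = _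
    rw [Matrix.mulVec, dotProduct]
    refine Finset.sum_congr rfl fun j _ => ?_
    rw [_root_.map_smul, Finsupp.smul_apply, smul_eq_mul]
    exact mul_comm _ _
  have hAsurj : Function.Surjective A.mulVecLin := by
    intro w
    set y : R := ∑ i, w i • bR i with hydef
    obtain ⟨v, hv⟩ : ∃ v, T.mulVecLin v = (y : Fin k → ℤ) := y.2
    refine ⟨v, ?_⟩
    ext i
    have hvmem : T.mulVecLin v ∈ R := LinearMap.mem_range_self _ _
    rw [hAmul v hvmem i]
    have : (⟨T.mulVecLin v, hvmem⟩ : R) = y := Subtype.ext hv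
    rw [this, hydef]
    exact congrFun (bR.repr_sum_self w) i
  obtain ⟨s, hs⟩ := Module.projective_lifting_property A.mulVecLin
    (LinearMap.id : (Fin r → ℤ) →ₗ[ℤ] _) hAsurj
  let S : Matrix (Fin k) (Fin r) ℤ := Matrix.of fun j i => s (Pi.single i 1) j
  have hAS : A * S = 1 := by
    ext i i'
    rw [Matrix.mul_apply, Matrix.one_apply]
    have : ∑ j, A i j * S j i' = A.mulVecLin (s (Pi.single i' 1)) i := rfl
    rw [this]
    have h2 := LinearMap.congr_fun hs (Pi.single i' (1 : ℤ))
    have h3 : A.mulVecLin (s (Pi.single i' 1)) = Pi.single i' 1 := h2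
    rw [h3, Pi.single_apply]
  -- now conclude for every field
  refine ⟨r, fun K _ => ?_⟩
  let f : ℤ →+* K := Int.castRingHom K
  show (T.map ⇑f).rank = r
  have hfr : (Matrix.fromRows A (0 : Matrix (Fin c) (Fin k) ℤ)).map ⇑f
      = Matrix.fromRows (A.map ⇑f) (0 : Matrix (Fin c) (Fin k) K) := by
    ext x j
    cases x with
    | inl i => rfl
    | inr i => simp [Matrix.fromRows_apply_inr]
  have hTmap : T.map ⇑f = P.map ⇑f *
      (Matrix.fromRows (A.map ⇑f) (0 : Matrix (Fin c) (Fin k) K)) := by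
    rw [← hfr, ← Matrix.map_mul, ← hT]
  rw [hTmap]
  rw [rank_mul_eq_of_inv (P.map ⇑f) (P'.map ⇑f)
    (by rw [← Matrix.map_mul, hP'P]; exact Matrix.map_one ⇑f f.map_zero f.map_one)]
  rw [rank_fromRows_zero]
  rw [rank_eq_card_of_mul_eq_one (A.map ⇑f) (S.map ⇑f)
    (by rw [← Matrix.map_mul, hAS]; exact Matrix.map_one ⇑f f.map_zero f.map_one)]
  exact Fintype.card_fin r

/-- If `T * T = 0` and the homology of `T` is free, then the cokernel of `T` is free. -/
theorem coker_free_of_homology_free {k : ℕ} (T : Matrix (Fin k) (Fin k) ℤ)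
    (hTT : T * T = 0) (h : Module.Free ℤ (matrixHomology T)) :
    Module.Free ℤ ((Fin k → ℤ) ⧸ LinearMap.range T.mulVecLin) := by
  classical
  set R : Submodule ℤ (Fin k → ℤ) := LinearMap.range T.mulVecLin with hRdef
  set Kr : Submodule ℤ (Fin k → ℤ) := LinearMap.ker T.mulVecLin with hKdef
  haveI hfree : Module.Free ℤ (matrixHomology T) := h
  haveI : NoZeroSMulDivisors ℤ ((Fin k → ℤ) ⧸ R) := by
    constructor
    intro n x hnx
    by_cases hn : n = 0
    · exact Or.inl hn
    right
    obtain ⟨v, rfl⟩ := R.mkQ_surjective x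
    have hnv : n • v ∈ R := by
      rwa [← _root_.map_smul, Submodule.mkQ_apply, Submodule.Quotient.mk_eq_zero] at hnx
    have hvker : v ∈ Kr := by
      have h1 : T.mulVecLin (n • v) = 0 := by
        obtain ⟨w, hw⟩ := hnv
        rw [← hw, ← LinearMap.comp_apply, ← Matrix.mulVecLin_mul, hTT, Matrix.mulVecLin_zero,
          LinearMap.zero_apply]
      rw [_root_.map_smul] at h1
      rcases smul_eq_zero.mp h1 with h' | h'
      · exact absurd (by exact_mod_cast h') hn
      · exact h'
    set ξ : matrixHomology T := Submodule.Quotient.mk (⟨v, hvker⟩ : Kr) with hξdef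
    have hnξ : n • ξ = 0 := by
      rw [hξdef, ← Submodule.Quotient.mk_smul, Submodule.Quotient.mk_eq_zero]
      exact hnv
    have hξ0 : ξ = 0 := by
      rcases smul_eq_zero.mp hnξ with h' | h'
      · exact absurd (by exact_mod_cast h') hn
      · exact h'
    rw [hξdef, Submodule.Quotient.mk_eq_zero] at hξ0
    rw [Submodule.mkQ_apply, Submodule.Quotient.mk_eq_zero]
    exact hξ0
  exact Module.free_of_finite_type_torsion_free'

end FieldIndependence

section Sums

variable {M : Type*} [AddCommMonoid M]

private lemma sum_of_inj {N m : ℕ} (g : Fin m → Fin N) (hg : Function.Injective g)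
    (h : Fin N → M) (hz : ∀ c, (∀ t, g t ≠ c) → h c = 0) : ∑ c, h c = ∑ t, h (g t) := by
  classical
  have hmap : ∑ t, h (g t) = ∑ c ∈ Finset.univ.map ⟨g, hg⟩, h c :=
    (Finset.sum_map Finset.univ ⟨g, hg⟩ h).symm
  rw [hmap]
  refine (Finset.sum_subset (Finset.subset_univ _) ?_).symm
  intro c _ hc
  refine hz c fun t hgt => hc ?_
  exact Finset.mem_map.mpr ⟨t, Finset.mem_univ _, hgt⟩

end Sums

section Corner

variable {K : Type*} [Field K] {N : ℕ}

/-- rows `i, …, N-1` -/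
private def rowEmb (N i : ℕ) (hi : i ≤ N) : Fin (N - i) → Fin N := fun t => ⟨i + t.1, by omega⟩

/-- columns `0, …, j-1` -/
private def colEmb (N j : ℕ) (hj : j ≤ N) : Fin j → Fin N := fun s => ⟨s.1, by omega⟩

private lemma rowEmb_inj {N i : ℕ} (hi : i ≤ N) : Function.Injective (rowEmb N i hi) := by
  intro a b hab
  have := congrArg Fin.val hab
  simp only [rowEmb] at this
  exact Fin.ext (by omega)

private lemma colEmb_inj {N j : ℕ} (hj : j ≤ N) : Function.Injective (colEmb N j hj) := by
  intro a b hab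
  have := congrArg Fin.val hab
  simp only [colEmb] at this
  exact Fin.ext (by omega)

/-- The corner submatrix with rows `≥ i` and columns `< j`. -/
private def corner (M : Matrix (Fin N) (Fin N) K) (i j : ℕ) (hi : i ≤ N) (hj : j ≤ N) :
    Matrix (Fin (N - i)) (Fin j) K :=
  M.submatrix (rowEmb N i hi) (colEmb N j hj)

/-- Splitting a product along the rows `≥ i` when the left factor is upper triangular. -/
private lemma submatrix_mul_rows {V M : Matrix (Fin N) (Fin N) K}
    (hV : IsUpperTriangularMat V) {ι : Type*} (g : ι → Fin N) (i : ℕ) (hi : i ≤ N) :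
    (V * M).submatrix (rowEmb N i hi) g =
      V.submatrix (rowEmb N i hi) (rowEmb N i hi) * M.submatrix (rowEmb N i hi) g := by
  ext t s
  rw [Matrix.submatrix_apply, Matrix.mul_apply, Matrix.mul_apply]
  refine sum_of_inj (rowEmb N i hi) (rowEmb_inj hi) _ fun c hc => ?_
  have hlt : c.1 < i := by
    by_contra hge
    push_neg at hge
    exact hc ⟨c.1 - i, by omega⟩ (Fin.ext (by simp [rowEmb]; omega))
  rw [hV (rowEmb N i hi t) c (show c.1 < i + t.1 by omega), zero_mul]

/-- Splitting a product along the columns `< j` when the right factor is upper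
triangular. -/
private lemma submatrix_mul_cols {U M : Matrix (Fin N) (Fin N) K}
    (hU : IsUpperTriangularMat U) {ι : Type*} (f : ι → Fin N) (j : ℕ) (hj : j ≤ N) :
    (M * U).submatrix f (colEmb N j hj) =
      M.submatrix f (colEmb N j hj) * U.submatrix (colEmb N j hj) (colEmb N j hj) := by
  ext t s
  rw [Matrix.submatrix_apply, Matrix.mul_apply, Matrix.mul_apply]
  refine sum_of_inj (colEmb N j hj) (colEmb_inj hj) _ fun c hc => ?_
  have hge : j ≤ c.1 := by
    by_contra hlt
    push_neg at hlt
    exact hc ⟨c.1, hlt⟩ (Fin.ext (by simp [colEmb]))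
  rw [hU c (colEmb N j hj s) (show s.1 < c.1 by omega), mul_zero]

private lemma submatrix_one_inj {m : ℕ} (f : Fin m → Fin N) (hf : Function.Injective f) :
    (1 : Matrix (Fin N) (Fin N) K).submatrix f f = 1 := by
  ext a b
  rw [Matrix.submatrix_apply, Matrix.one_apply, Matrix.one_apply]
  simp [hf.eq_iff]

/-- The rank of a corner is invariant under conjugation by an invertible upper
triangular matrix. -/
private lemma rank_corner_conj {U M : Matrix (Fin N) (Fin N) K} (hU : IsUnit U)
    (hUT : IsUpperTriangularMat U) (i j : ℕ) (hi : i ≤ N) (hj : j ≤ N) :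
    (corner (U⁻¹ * M * U) i j hi hj).rank = (corner M i j hi hj).rank := by
  classical
  have hdet : IsUnit U.det := (Matrix.isUnit_iff_isUnit_det U).mp hU
  have hUUinv : U * U⁻¹ = 1 := Matrix.mul_nonsing_inv U hdet
  have hUinvU : U⁻¹ * U = 1 := Matrix.nonsing_inv_mul U hdet
  have hUinvT : IsUpperTriangularMat U⁻¹ := by
    haveI : Invertible U := U.invertibleOfIsUnitDet hdet
    have hbt : U.BlockTriangular id := fun a b hab => hUT a b hab
    have := Matrix.blockTriangular_inv_of_blockTriangular hbt
    exact fun a b hab => this hab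
  set ri := rowEmb N i hi
  set ci := colEmb N j hj
  have key : corner (U⁻¹ * M * U) i j hi hj =
      U⁻¹.submatrix ri ri * (M.submatrix ri ci * U.submatrix ci ci) := by
    have h1 : (U⁻¹ * M * U).submatrix ri ci =
        U⁻¹.submatrix ri ri * (M * U).submatrix ri ci := by
      rw [show U⁻¹ * M * U = U⁻¹ * (M * U) by rw [Matrix.mul_assoc]]
      exact submatrix_mul_rows hUinvT ci i hi
    have h2 : (M * U).submatrix ri ci =
        M.submatrix ri ci * U.submatrix ci ci := submatrix_mul_cols hUT ri j hj
    rw [corner, h1, h2]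
  rw [key]
  have hrr1 : U.submatrix ri ri * U⁻¹.submatrix ri ri = 1 := by
    have := submatrix_mul_rows (M := U⁻¹) hUT ri i hi
    rw [hUUinv] at this
    rw [← this, submatrix_one_inj ri (rowEmb_inj hi)]
  have hcc1 : U.submatrix ci ci * U⁻¹.submatrix ci ci = 1 := by
    have := submatrix_mul_cols (M := U) hUinvT ci j hj
    rw [hUUinv] at this
    rw [← this, submatrix_one_inj ci (colEmb_inj hj)]
  rw [rank_mul_eq_of_inv (U⁻¹.submatrix ri ri) (U.submatrix ri ri) hrr1,
    rank_mul_eq_of_inv_right (U.submatrix ci ci) (U⁻¹.submatrix ci ci) hcc1]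
  rfl

/-- A submatrix is a product with 0/1 selector matrices. -/
private lemma submatrix_eq_mul_sel {a b c d : ℕ} (X : Matrix (Fin b) (Fin c) K)
    (φ : Fin a → Fin b) (ψ : Fin d → Fin c) :
    X.submatrix φ ψ = (Matrix.of fun t u => if u = φ t then (1:K) else 0) * X *
      (Matrix.of fun v s => if v = ψ s then (1:K) else 0) := by
  ext t s
  rw [Matrix.mul_apply]
  have hstep : ∀ v, ((Matrix.of fun t u => if u = φ t then (1:K) else 0) * X) t v
      = X (φ t) v := by
    intro v
    rw [Matrix.mul_apply]
    simp [Finset.sum_ite_eq, Matrix.of_apply]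
  simp only [hstep, Matrix.of_apply]
  simp [Finset.sum_ite_eq', Matrix.submatrix_apply]

private lemma rank_submatrix_le' {a b c d : ℕ} (X : Matrix (Fin b) (Fin c) K)
    (φ : Fin a → Fin b) (ψ : Fin d → Fin c) : (X.submatrix φ ψ).rank ≤ X.rank := by
  rw [submatrix_eq_mul_sel X φ ψ]
  exact le_trans (Matrix.rank_mul_le_left _ _) (Matrix.rank_mul_le_right _ _)

/-- For a strictly upper triangular matrix, the corner has the same rank as the square
diagonal block on rows/columns `[i, j)`. -/
private lemma rank_corner_eq_rank_block {M : Matrix (Fin N) (Fin N) K}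
    (hM : IsStrictlyUpperTriangular M) (i j : ℕ) (hij : i < j) (hi : i ≤ N) (hj : j ≤ N) :
    (corner M i j hi hj).rank =
      (M.submatrix (fun t : Fin (j - i) => (⟨i + t.1, by omega⟩ : Fin N))
        (fun s : Fin (j - i) => (⟨i + s.1, by omega⟩ : Fin N))).rank := by
  classical
  set blk := M.submatrix (fun t : Fin (j - i) => (⟨i + t.1, by omega⟩ : Fin N))
        (fun s : Fin (j - i) => (⟨i + s.1, by omega⟩ : Fin N)) with hblk
  refine le_antisymm ?_ ?_
  · set G₁ : Matrix (Fin (N - i)) (Fin (j - i)) K :=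
      Matrix.of fun t u => if t.1 = u.1 then 1 else 0 with hG₁
    set G₂ : Matrix (Fin (j - i)) (Fin j) K :=
      Matrix.of fun v s => if i + v.1 = s.1 then 1 else 0 with hG₂
    have hcorner : corner M i j hi hj = G₁ * blk * G₂ := by
      ext t s
      have hmid : ∀ v : Fin (j - i), (G₁ * blk) t v =
          if ht : t.1 < j - i then blk ⟨t.1, ht⟩ v else 0 := by
        intro v
        rw [Matrix.mul_apply]
        by_cases ht : t.1 < j - i
        · rw [dif_pos ht, Finset.sum_eq_single (⟨t.1, ht⟩ : Fin (j - i))]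
          · simp [hG₁]
          · intro u _ hu
            have : ¬ (t.1 = u.1) := fun h => hu (Fin.ext h.symm)
            simp [hG₁, this]
          · intro h; exact absurd (Finset.mem_univ _) h
        · rw [dif_neg ht]
          refine Finset.sum_eq_zero fun u _ => ?_
          have : ¬ (t.1 = u.1) := fun h => ht (h ▸ u.2)
          simp [hG₁, this]
      rw [Matrix.mul_apply]
      simp only [hmid, hG₂, Matrix.of_apply]
      by_cases hs : i ≤ s.1
      · have hsv : (s.1 - i) < j - i := by omega
        rw [Finset.sum_eq_single (⟨s.1 - i, hsv⟩ : Fin (j - i))]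
        rotate_left
        · intro v _ hv
          have hne : ¬ (i + v.1 = s.1) := fun h => hv (Fin.ext (show v.1 = s.1 - i by omega))
          rw [if_neg hne, mul_zero]
        · intro h; exact absurd (Finset.mem_univ _) h
        · rw [if_pos (show i + (s.1 - i) = s.1 by omega), mul_one]
          by_cases ht : t.1 < j - i
          · rw [dif_pos ht]
            show M (rowEmb N i hi t) (colEmb N j hj s) =
              M ⟨i + t.1, by omega⟩ ⟨i + (s.1 - i), by omega⟩
            congr 1
            exact Fin.ext (show s.1 = i + (s.1 - i) by omega)
          · rw [dif_neg ht]
            exact hM _ _ (show s.1 ≤ i + t.1 by omega)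
      · refine Eq.trans ?_ (Finset.sum_eq_zero fun v _ => by
          rw [if_neg (show ¬ (i + v.1 = s.1) by omega), mul_zero]).symm
        exact hM _ _ (show s.1 ≤ i + t.1 by omega)
    rw [hcorner]
    exact le_trans (Matrix.rank_mul_le_left _ _) (Matrix.rank_mul_le_right _ _)
  · have hsub : blk = (corner M i j hi hj).submatrix
        (fun t : Fin (j - i) => (⟨t.1, by omega⟩ : Fin (N - i)))
        (fun s : Fin (j - i) => (⟨i + s.1, by omega⟩ : Fin j)) := by
      ext t s
      rw [hblk, Matrix.submatrix_apply, Matrix.submatrix_apply]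
      show M _ _ = M (rowEmb N i hi _) (colEmb N j hj _)
      congr 1
    rw [hsub]
    exact rank_submatrix_le' _ _ _

end Corner

section Counting

open scoped Classical in
/-- Number of nonzero entries in rows `≥ i` and columns `< j`. -/
private noncomputable def cnt {α : Type*} [Zero α] {N : ℕ} (C : Matrix (Fin N) (Fin N) α)
    (i j : ℕ) : ℕ :=
  (Finset.univ.filter fun p : Fin N × Fin N => C p.1 p.2 ≠ 0 ∧ i ≤ p.1.1 ∧ p.2.1 < j).card

open scoped Classical in
private noncomputable def ecnt {α : Type*} [Zero α] {N : ℕ} (C : Matrix (Fin N) (Fin N) α)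
    (i : ℕ) (b : Fin N) : ℕ :=
  (Finset.univ.filter fun r : Fin N => C r b ≠ 0 ∧ i ≤ r.1).card

private lemma cnt_succ {α : Type*} [Zero α] {N : ℕ} (C : Matrix (Fin N) (Fin N) α)
    (i : ℕ) (b : Fin N) : cnt C i (b.1 + 1) = cnt C i b.1 + ecnt C i b := by
  classical
  rw [cnt, cnt, ecnt]
  have himg : (Finset.univ.filter fun p : Fin N × Fin N =>
        C p.1 p.2 ≠ 0 ∧ i ≤ p.1.1 ∧ p.2.1 < b.1 + 1)
      = (Finset.univ.filter fun p : Fin N × Fin N => C p.1 p.2 ≠ 0 ∧ i ≤ p.1.1 ∧ p.2.1 < b.1)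
        ∪ (Finset.univ.filter fun r : Fin N => C r b ≠ 0 ∧ i ≤ r.1).image (fun r => (r, b)) := by
    ext p
    simp only [Finset.mem_filter, Finset.mem_union, Finset.mem_image, Finset.mem_univ, true_and]
    constructor
    · rintro ⟨hne, hi, hlt⟩
      by_cases hb : p.2 = b
      · exact Or.inr ⟨p.1, ⟨by rwa [← hb], hi⟩, by rw [← hb]⟩
      · exact Or.inl ⟨hne, hi, by
          have : p.2.1 ≠ b.1 := fun h => hb (Fin.ext h)
          omega⟩
    · rintro (⟨hne, hi, hlt⟩ | ⟨r, ⟨hne, hi⟩, hp⟩)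
      · exact ⟨hne, hi, by omega⟩
      · rw [← hp]
        exact ⟨hne, hi, Nat.lt_succ_self _⟩
  rw [himg, Finset.card_union_of_disjoint, Finset.card_image_of_injective]
  · intro r₁ r₂ h
    exact (Prod.mk.injEq _ _ _ _ ▸ h).1
  · rw [Finset.disjoint_left]
    rintro p hp hq
    obtain ⟨r, _, hrp⟩ := Finset.mem_image.mp hq
    have hvb : p.2.1 = b.1 := congrArg Fin.val (by rw [← hrp] : p.2 = b)
    have h2 := (Finset.mem_filter.mp hp).2.2.2
    omega

open scoped Classical in
private lemma ecnt_succ {α : Type*} [Zero α] {N : ℕ} (C : Matrix (Fin N) (Fin N) α)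
    (a b : Fin N) :
    ecnt C a.1 b = ecnt C (a.1 + 1) b + (if C a b ≠ 0 then 1 else 0) := by
  classical
  rw [ecnt, ecnt]
  by_cases hC : C a b ≠ 0
  · rw [if_pos hC]
    have : (Finset.univ.filter fun r : Fin N => C r b ≠ 0 ∧ a.1 ≤ r.1)
        = insert a (Finset.univ.filter fun r : Fin N => C r b ≠ 0 ∧ a.1 + 1 ≤ r.1) := by
      ext r
      simp only [Finset.mem_filter, Finset.mem_insert, Finset.mem_univ, true_and]
      constructor
      · rintro ⟨hne, hle⟩
        by_cases hr : r = a
        · exact Or.inl hr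
        · exact Or.inr ⟨hne, by
            have : r.1 ≠ a.1 := fun h => hr (Fin.ext h)
            omega⟩
      · rintro (rfl | ⟨hne, hle⟩)
        · exact ⟨hC, le_refl _⟩
        · exact ⟨hne, by omega⟩
    rw [this, Finset.card_insert_of_notMem]
    intro hmem
    have := (Finset.mem_filter.mp hmem).2.2
    omega
  · rw [if_neg hC, add_zero]
    congr 1
    ext r
    simp only [Finset.mem_filter, Finset.mem_univ, true_and]
    constructor
    · rintro ⟨hne, hle⟩
      refine ⟨hne, ?_⟩
      rcases Nat.eq_or_lt_of_le hle with h | h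
      · exfalso; exact hne (by rw [show r = a from Fin.ext h.symm]; exact not_not.mp hC)
      · omega
    · rintro ⟨hne, hle⟩
      exact ⟨hne, by omega⟩

open scoped Classical in
/-- Whether an entry of a matrix is nonzero is detected by corner counts. -/
private lemma entry_ne_zero_iff_cnt {α : Type*} [Zero α] {N : ℕ}
    (C : Matrix (Fin N) (Fin N) α) (a b : Fin N) :
    C a b ≠ 0 ↔ cnt C a.1 (b.1 + 1) + cnt C (a.1 + 1) b.1 =
      cnt C (a.1 + 1) (b.1 + 1) + cnt C a.1 b.1 + 1 := by
  rw [cnt_succ C a.1 b, cnt_succ C (a.1 + 1) b, ecnt_succ C a b]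
  by_cases hC : C a b ≠ 0
  · have hone : (if C a b ≠ 0 then 1 else 0) = 1 := if_pos hC
    rw [hone]
    exact iff_of_true hC (by omega)
  · have hzero : (if C a b ≠ 0 then 1 else 0) = 0 := if_neg hC
    rw [hzero]
    exact iff_of_false hC (by omega)

/-- For a partial matching, the rank of a corner equals the number of nonzero entries
in that corner. -/
private lemma rank_corner_eq_cnt {K : Type*} [Field K] {N : ℕ}
    {C : Matrix (Fin N) (Fin N) K} (hC : IsPartialMatching C) (i j : ℕ)
    (hi : i ≤ N) (hj : j ≤ N) : (corner C i j hi hj).rank = cnt C i j := by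
  classical
  set D := corner C i j hi hj with hD
  set matched : Finset (Fin j) := Finset.univ.filter (fun s => ∃ t, D t s ≠ 0) with hmat
  have hψ : ∀ s : {x // x ∈ matched}, ∃ t, D t s.1 ≠ 0 := fun s => (Finset.mem_filter.mp s.2).2
  let ψ : {x // x ∈ matched} → Fin (N - i) := fun s => (hψ s).choose
  have hψspec : ∀ s, D (ψ s) s.1 ≠ 0 := fun s => (hψ s).choose_spec
  have hψinj : Function.Injective ψ := by
    intro s₁ s₂ h
    have h1 := hψspec s₁
    have h2 := hψspec s₂
    rw [h] at h1
    have h3 := hC.2.1 (rowEmb N i hi (ψ s₂)) (colEmb N j hj s₁.1) (colEmb N j hj s₂.1) h1 h2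
    have hval := congrArg Fin.val h3
    exact Subtype.ext (Fin.ext hval)
  have hcol : ∀ s : {x // x ∈ matched}, (fun t => D t s.1) = Pi.single (ψ s) (1 : K) := by
    intro s
    funext t
    by_cases ht : t = ψ s
    · rw [ht, Pi.single_eq_same]
      rcases hC.1 (rowEmb N i hi (ψ s)) (colEmb N j hj s.1) with h | h
      · exact absurd h (hψspec s)
      · exact h
    · rw [Pi.single_eq_of_ne ht]
      by_contra hne
      exact ht (hC.2.2 (rowEmb N i hi t) (rowEmb N i hi (ψ s)) (colEmb N j hj s.1) hne (hψspec s)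
        |> fun hrow => by
          have hval : i + t.1 = i + (ψ s).1 := congrArg Fin.val hrow
          exact Fin.ext (by omega))
  have hrank : D.rank = matched.card := by
    rw [Matrix.rank_eq_finrank_span_cols]
    have hspan : Submodule.span K (Set.range D.transpose) =
        Submodule.span K (Set.range fun s : {x // x ∈ matched} => (fun t => D t s.1)) := by
      apply le_antisymm
      · rw [Submodule.span_le]
        rintro v ⟨s, rfl⟩
        by_cases hs : s ∈ matched
        · exact Submodule.subset_span ⟨⟨s, hs⟩, rfl⟩
        · have : D.transpose s = 0 := by
            funext t
            by_contra hne
            exact hs (Finset.mem_filter.mpr ⟨Finset.mem_univ _, ⟨t, hne⟩⟩)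
          rw [this]
          exact Submodule.zero_mem _
      · rw [Submodule.span_le]
        rintro v ⟨s, rfl⟩
        exact Submodule.subset_span ⟨s.1, rfl⟩
    rw [show D.col = Dᵀ from rfl, hspan]
    have hlin : LinearIndependent K (fun s : {x // x ∈ matched} => (fun t => D t s.1)) := by
      have heq : (fun s : {x // x ∈ matched} => (fun t => D t s.1)) =
          (fun s => Pi.single (ψ s) (1 : K)) := funext hcol
      rw [heq]
      have hbasis : LinearIndependent K (fun t : Fin (N - i) => Pi.single t (1 : K)) := by
        have := (Pi.basisFun K (Fin (N - i))).linearIndependent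
        convert this using 1
        funext t
        exact (Pi.basisFun_apply K (Fin (N - i)) t).symm
      exact hbasis.comp ψ hψinj
    rw [finrank_span_eq_card hlin, Fintype.card_coe]
  rw [hrank, cnt]
  refine (Finset.card_bij
    (fun (p : Fin N × Fin N) (hp : p ∈ Finset.univ.filter fun p : Fin N × Fin N =>
        C p.1 p.2 ≠ 0 ∧ i ≤ p.1.1 ∧ p.2.1 < j) =>
      (⟨p.2.1, (Finset.mem_filter.mp hp).2.2.2⟩ : Fin j)) ?_ ?_ ?_).symm
  · intro p hp
    obtain ⟨hne, hile, hltj⟩ := (Finset.mem_filter.mp hp).2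
    refine Finset.mem_filter.mpr ⟨Finset.mem_univ _, ⟨⟨p.1.1 - i, by omega⟩, ?_⟩⟩
    show C ⟨i + (p.1.1 - i), by omega⟩ ⟨p.2.1, by omega⟩ ≠ 0
    have h1 : (⟨i + (p.1.1 - i), by omega⟩ : Fin N) = p.1 :=
      Fin.ext (show i + (p.1.1 - i) = p.1.1 by omega)
    have h2 : (⟨p.2.1, by omega⟩ : Fin N) = p.2 := Fin.ext rfl
    rw [h1, h2]
    exact hne
  · intro p hp p' hp' heq
    have h2 := (Finset.mem_filter.mp hp).2
    have h2' := (Finset.mem_filter.mp hp').2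
    have hcols : p.2 = p'.2 := by
      have h := congrArg Fin.val heq
      exact Fin.ext h
    have hrows : p.1 = p'.1 := hC.2.2 p.1 p'.1 p.2 h2.1 (by rw [hcols]; exact h2'.1)
    exact Prod.ext hrows hcols
  · intro s hs
    obtain ⟨t, ht⟩ := (Finset.mem_filter.mp hs).2
    refine ⟨(⟨i + t.1, by omega⟩, ⟨s.1, by omega⟩), Finset.mem_filter.mpr
      ⟨Finset.mem_univ _, ht, show i ≤ i + t.1 by omega, show s.1 < j from s.2⟩, Fin.ext rfl⟩

end Counting

section Interval

private lemma interval_sq_zero {N : ℕ} {B : Matrix (Fin N) (Fin N) ℤ}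
    (hB : IsStrictlyUpperTriangular B) (hBB : B * B = 0) (i j : ℕ) (hij : i ≤ j)
    (hj : j ≤ N) : intervalSubmatrix B i j hj * intervalSubmatrix B i j hj = 0 := by
  ext a b
  rw [Matrix.mul_apply, Matrix.zero_apply]
  have ha : i + a.1 < N := by have := a.2; omega
  have hb : i + b.1 < N := by have := b.2; omega
  let g : Fin (j - i) → Fin N := fun t => ⟨i + t.1, by have := t.2; omega⟩
  have hg : Function.Injective g := by
    intro x y hxy
    have := congrArg Fin.val hxy
    exact Fin.ext (by simpa [g] using this)
  have hsum := sum_of_inj g hg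
    (fun c => B ⟨i + a.1, ha⟩ c * B c ⟨i + b.1, hb⟩) ?_
  · have h0 : (B * B) ⟨i + a.1, ha⟩ ⟨i + b.1, hb⟩ = 0 := by rw [hBB]; rfl
    rw [Matrix.mul_apply] at h0
    calc ∑ c : Fin (j - i), intervalSubmatrix B i j hj a c * intervalSubmatrix B i j hj c b
        = ∑ t : Fin (j - i), B ⟨i + a.1, ha⟩ (g t) * B (g t) ⟨i + b.1, hb⟩ := rfl
      _ = ∑ c : Fin N, B ⟨i + a.1, ha⟩ c * B c ⟨i + b.1, hb⟩ := hsum.symm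
      _ = 0 := h0
  · intro c hc
    have : c.1 < i ∨ j ≤ c.1 := by
      by_contra hcon
      push_neg at hcon
      exact hc ⟨c.1 - i, by omega⟩ (Fin.ext (show i + (c.1 - i) = c.1 by omega))
    rcases this with h | h
    · show B ⟨i + a.1, ha⟩ c * B c ⟨i + b.1, hb⟩ = 0
      rw [hB ⟨i + a.1, ha⟩ c (show c.1 ≤ i + a.1 by omega), zero_mul]
    · show B ⟨i + a.1, ha⟩ c * B c ⟨i + b.1, hb⟩ = 0
      rw [hB c ⟨i + b.1, hb⟩ (show i + b.1 ≤ c.1 by have := b.2; omega), mul_zero]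

end Interval

set_option maxHeartbeats 1000000 in
/-- (Chain-level matrix form of Theorem 1 / Corollary 3 of the
paper.)  Let `B` be a strictly upper triangular integer matrix with `B * B = 0`.  If
for all `0 ≤ m < n ≤ N` the homology `ker B_{(m,n]} ⧸ range B_{(m,n]}` is a free
`ℤ`-module, then the support of the partial-matching form of `B` is independent of the
coefficient field. -/
theorem support_field_independent_of_free_homology {N : ℕ}
    (B : Matrix (Fin N) (Fin N) ℤ)
    (hB : IsStrictlyUpperTriangular B) (hBB : B * B = 0)
    (hfree : ∀ m n : ℕ, m < n → ∀ hn : n ≤ N,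
      Module.Free ℤ (matrixHomology (intervalSubmatrix B m n hn))) :
    ∀ (𝕜₁ : Type) [Field 𝕜₁] (𝕜₂ : Type) [Field 𝕜₂]
      (U₁ : Matrix (Fin N) (Fin N) 𝕜₁) (U₂ : Matrix (Fin N) (Fin N) 𝕜₂),
      IsUnit U₁ → IsUpperTriangularMat U₁ →
      IsStrictlyUpperTriangular (U₁⁻¹ * B.map (Int.cast : ℤ → 𝕜₁) * U₁) →
      IsPartialMatching (U₁⁻¹ * B.map (Int.cast : ℤ → 𝕜₁) * U₁) →
      IsUnit U₂ → IsUpperTriangularMat U₂ →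
      IsStrictlyUpperTriangular (U₂⁻¹ * B.map (Int.cast : ℤ → 𝕜₂) * U₂) →
      IsPartialMatching (U₂⁻¹ * B.map (Int.cast : ℤ → 𝕜₂) * U₂) →
      {p : Fin N × Fin N | (U₁⁻¹ * B.map (Int.cast : ℤ → 𝕜₁) * U₁) p.1 p.2 ≠ 0} =
      {p : Fin N × Fin N | (U₂⁻¹ * B.map (Int.cast : ℤ → 𝕜₂) * U₂) p.1 p.2 ≠ 0} := by
  intro 𝕜₁ _ 𝕜₂ _ U₁ U₂ hU₁ hUT₁ _ hpm₁ hU₂ hUT₂ _ hpm₂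
  set C₁ := U₁⁻¹ * B.map (Int.cast : ℤ → 𝕜₁) * U₁ with hC₁def
  set C₂ := U₂⁻¹ * B.map (Int.cast : ℤ → 𝕜₂) * U₂ with hC₂def
  -- the mapped matrices are strictly upper triangular
  have hsut₁ : IsStrictlyUpperTriangular (B.map (Int.cast : ℤ → 𝕜₁)) := by
    intro a b hab
    show ((B a b : ℤ) : 𝕜₁) = 0
    rw [hB a b hab, Int.cast_zero]
  have hsut₂ : IsStrictlyUpperTriangular (B.map (Int.cast : ℤ → 𝕜₂)) := by
    intro a b hab
    show ((B a b : ℤ) : 𝕜₂) = 0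
    rw [hB a b hab, Int.cast_zero]
  -- field-independence of the corner ranks of `B`
  have hcommon : ∀ (i j : ℕ) (hi : i ≤ N) (hj : j ≤ N),
      (corner (B.map (Int.cast : ℤ → 𝕜₁)) i j hi hj).rank =
      (corner (B.map (Int.cast : ℤ → 𝕜₂)) i j hi hj).rank := by
    intro i j hi hj
    by_cases hij : i < j
    · rw [rank_corner_eq_rank_block hsut₁ i j hij hi hj,
        rank_corner_eq_rank_block hsut₂ i j hij hi hj]
      set T := intervalSubmatrix B i j hj with hTdef
      have hblk₁ : (B.map (Int.cast : ℤ → 𝕜₁)).submatrix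
          (fun t : Fin (j - i) => (⟨i + t.1, by omega⟩ : Fin N))
          (fun s : Fin (j - i) => (⟨i + s.1, by omega⟩ : Fin N)) =
          T.map (Int.cast : ℤ → 𝕜₁) := by ext t s; rfl
      have hblk₂ : (B.map (Int.cast : ℤ → 𝕜₂)).submatrix
          (fun t : Fin (j - i) => (⟨i + t.1, by omega⟩ : Fin N))
          (fun s : Fin (j - i) => (⟨i + s.1, by omega⟩ : Fin N)) =
          T.map (Int.cast : ℤ → 𝕜₂) := by ext t s; rfl
      rw [hblk₁, hblk₂]
      have hTT : T * T = 0 := interval_sq_zero hB hBB i j (le_of_lt hij) hj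
      have hcoker := coker_free_of_homology_free T hTT (hfree i j hij hj)
      obtain ⟨r, hr⟩ := exists_rank_forall_field T hcoker
      have h1 := hr 𝕜₁ ‹Field 𝕜₁›
      have h2 := hr 𝕜₂ ‹Field 𝕜₂›
      rw [h1, h2]
    · -- the corner is zero
      have hzero : ∀ (K : Type) [Field K],
          IsStrictlyUpperTriangular (B.map (Int.cast : ℤ → K)) →
          corner (B.map (Int.cast : ℤ → K)) i j hi hj = 0 := by
        intro K _ hsut
        ext t s
        rw [Matrix.zero_apply]
        exact hsut _ _ (show s.1 ≤ i + t.1 by have := s.2; omega)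
      rw [hzero 𝕜₁ hsut₁, hzero 𝕜₂ hsut₂, Matrix.rank_zero, Matrix.rank_zero]
  -- counts agree
  have hcnt : ∀ (i j : ℕ), i ≤ N → j ≤ N → cnt C₁ i j = cnt C₂ i j := by
    intro i j hi hj
    rw [← rank_corner_eq_cnt hpm₁ i j hi hj, ← rank_corner_eq_cnt hpm₂ i j hi hj,
      hC₁def, hC₂def, rank_corner_conj hU₁ hUT₁ i j hi hj,
      rank_corner_conj hU₂ hUT₂ i j hi hj]
    exact hcommon i j hi hj
  -- conclude
  ext p
  rw [Set.mem_setOf_eq, Set.mem_setOf_eq]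
  rw [entry_ne_zero_iff_cnt C₁ p.1 p.2, entry_ne_zero_iff_cnt C₂ p.1 p.2]
  rw [hcnt p.1.1 (p.2.1 + 1) (by omega) (by omega),
    hcnt (p.1.1 + 1) p.2.1 (by omega) (by omega),
    hcnt (p.1.1 + 1) (p.2.1 + 1) (by omega) (by omega),
    hcnt p.1.1 p.2.1 (by omega) (by omega)]
end

section
/- Let B be an N×N integer matrix that is strictly upper triangular and satisfies B * B = 0. For 0 ≤ m < n ≤ N let B_{(m,n]} denote the square submatrix of B with rows and columns indexed by {m+1, …, n}; then B_{(m,n]} * B_{(m,n]} = 0, and its homology is the ℤ-module ker(B_{(m,n]}) ⧸ range(B_{(m,n]}), where B_{(m,n]} is regarded as a ℤ-linear endomorphism of ℤ^{n−m}. Suppose that the support of the partial-matching form of B is the same over ℚ and over ZMod p for every prime p: that is, for every field 𝕜 among ℚ and the ZMod p, whenever U is an invertible upper triangular matrix over 𝕜 such that C = U⁻¹ * B' * U is strictly upper triangular and in partial-matching form (B' being B with entries mapped into 𝕜), the set {(i, j) : C i j ≠ 0} is the same. Then for all 0 ≤ m < n ≤ N the homology ℤ-module ker(B_{(m,n]})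 ⧸ range(B_{(m,n]}) is free. (This is the chain-level matrix form of the converse direction of the paper's Corollary 3, coming from Theorem 2: if the persistence diagram is independent of the coefficient field, then all relative homology groups H(X_n, X_m; ℤ) of the filtration are free.) -/
namespace PMForm

open Matrix

variable {K : Type*} [Field K] {N : ℕ}

/-- conjugation by an invertible upper triangular matrix -/
def ConjUT (B C : Matrix (Fin N) (Fin N) K) : Prop :=
  ∃ U V : Matrix (Fin N) (Fin N) K, U * V = 1 ∧ V * U = 1 ∧
    IsUpperTriangularMat U ∧ IsUpperTriangularMat V ∧ C = V * B * U

lemma ut_one : IsUpperTriangularMat (1 : Matrix (Fin N) (Fin N) K) := by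
  intro i j h
  exact Matrix.one_apply_ne (Ne.symm (ne_of_lt h))

lemma ut_mul {U V : Matrix (Fin N) (Fin N) K} (hU : IsUpperTriangularMat U)
    (hV : IsUpperTriangularMat V) : IsUpperTriangularMat (U * V) := by
  intro i j h
  rw [Matrix.mul_apply]
  apply Finset.sum_eq_zero
  intro c _
  by_cases hc : c < i
  · rw [hU i c hc, zero_mul]
  · push_neg at hc
    rw [hV c j (lt_of_lt_of_le h hc), mul_zero]

lemma ConjUT.refl (B : Matrix (Fin N) (Fin N) K) : ConjUT B B :=
  ⟨1, 1, by simp, by simp, ut_one, ut_one, by simp⟩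

lemma ConjUT.trans {B C D : Matrix (Fin N) (Fin N) K} (h1 : ConjUT B C) (h2 : ConjUT C D) :
    ConjUT B D := by
  obtain ⟨U, V, hUV, hVU, hU, hV, rfl⟩ := h1
  obtain ⟨U', V', hUV', hVU', hU', hV', rfl⟩ := h2
  refine ⟨U * U', V' * V, ?_, ?_, ut_mul hU hU', ut_mul hV' hV, ?_⟩
  · calc U * U' * (V' * V) = U * (U' * V') * V := by simp only [Matrix.mul_assoc]
    _ = 1 := by rw [hUV', Matrix.mul_one, hUV]
  · calc V' * V * (U * U') = V' * (V * U) * U' := by simp only [Matrix.mul_assoc]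
    _ = 1 := by rw [hVU, Matrix.mul_one, hVU']
  · simp only [Matrix.mul_assoc]

lemma ConjUT.sq {B C : Matrix (Fin N) (Fin N) K} (h : ConjUT B C) (hB : B * B = 0) :
    C * C = 0 := by
  obtain ⟨U, V, hUV, hVU, hU, hV, rfl⟩ := h
  calc V * B * U * (V * B * U) = V * (B * (U * V) * B) * U := by simp only [Matrix.mul_assoc]
  _ = V * (B * B) * U := by rw [hUV, Matrix.mul_one]
  _ = 0 := by rw [hB, Matrix.mul_zero, Matrix.zero_mul]

lemma conj_step (C : Matrix (Fin N) (Fin N) K) (hC : IsStrictlyUpperTriangular C)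
    (w : Fin N → K) (t : Fin N) (hw : ∀ a, w a ≠ 0 → a < t) :
    ConjUT C (Matrix.of fun a b =>
      C a b + (∑ c, C a c * w c) * (if b = t then 1 else 0) - w a * C t b) := by
  classical
  have hwt : w t = 0 := by
    by_contra h
    exact absurd (hw t h) (lt_irrefl t)
  set A : Matrix (Fin N) (Fin N) K := Matrix.of fun a b => w a * (if b = t then 1 else 0) with hA
  have hXA : ∀ X : Matrix (Fin N) (Fin N) K,
      X * A = Matrix.of fun a b => (∑ c, X a c * w c) * (if b = t then 1 else 0) := by
    intro X
    ext a b
    simp only [Matrix.mul_apply, Matrix.of_apply, hA, Finset.sum_mul]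
    exact Finset.sum_congr rfl fun c _ => by ring
  have hAX : ∀ X : Matrix (Fin N) (Fin N) K,
      A * X = Matrix.of fun a b => w a * X t b := by
    intro X
    ext a b
    simp only [Matrix.mul_apply, Matrix.of_apply, hA]
    have : ∀ c : Fin N, (w a * if c = t then (1:K) else 0) * X c b
        = if c = t then w a * X c b else 0 := by
      intro c; split <;> simp
    rw [Finset.sum_congr rfl fun c _ => this c, Finset.sum_ite_eq' Finset.univ t]
    simp
  have hAA : A * A = 0 := by
    rw [hAX]
    ext a b
    simp [hA, hwt]
  have hUTA : ∀ a b : Fin N, b < a → A a b = 0 := by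
    intro a b hba
    by_cases hb : b = t
    · subst hb
      by_cases hwa : w a = 0
      · simp [hA, hwa]
      · exact absurd (hw a hwa) (not_lt_of_gt hba)
    · simp [hA, hb]
  refine ⟨1 + A, 1 - A, ?_, ?_, ?_, ?_, ?_⟩
  · have hexp : (1 + A) * (1 - A) = 1 + A - A - A * A := by noncomm_ring
    rw [hexp, hAA, sub_zero, add_sub_cancel_right]
  · have hexp : (1 - A) * (1 + A) = 1 + A - A - A * A := by noncomm_ring
    rw [hexp, hAA, sub_zero, add_sub_cancel_right]
  · intro a b h
    have := hUTA a b h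
    simp [Matrix.one_apply_ne (Ne.symm (ne_of_lt h)), this]
  · intro a b h
    have := hUTA a b h
    simp [Matrix.one_apply_ne (Ne.symm (ne_of_lt h)), this]
  · have hACA : A * C * A = 0 := by
      rw [hAX, hXA]
      ext a b
      simp only [Matrix.of_apply, Matrix.zero_apply]
      have : ∀ c : Fin N, (w a * C t c) * w c = 0 := by
        intro c
        by_cases hc : w c = 0
        · rw [hc, mul_zero]
        · rw [hC t c (le_of_lt (hw c hc)), mul_zero, zero_mul]
      rw [Finset.sum_congr rfl fun c _ => this c]
      simp
    have expand : (1 - A) * C * (1 + A) = C + C * A - A * C - A * C * A := by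
      noncomm_ring
    rw [expand, hACA, sub_zero, hXA, hAX]
    ext a b
    simp only [Matrix.add_apply, Matrix.sub_apply, Matrix.of_apply]

lemma conj_diag (C : Matrix (Fin N) (Fin N) K) (t : Fin N) (d : K) (hd : d ≠ 0) :
    ConjUT C (Matrix.of fun a b =>
      (if a = t then d else 1) * C a b * (if b = t then d⁻¹ else 1)) := by
  classical
  refine ⟨Matrix.diagonal (fun a => if a = t then d⁻¹ else 1),
    Matrix.diagonal (fun a => if a = t then d else 1), ?_, ?_, ?_, ?_, ?_⟩
  · rw [Matrix.diagonal_mul_diagonal]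
    have : (fun a : Fin N => (if a = t then d⁻¹ else 1) * (if a = t then d else 1))
        = fun _ => (1:K) := by
      funext a; split <;> simp [inv_mul_cancel₀ hd]
    rw [this, Matrix.diagonal_one]
  · rw [Matrix.diagonal_mul_diagonal]
    have : (fun a : Fin N => (if a = t then d else 1) * (if a = t then d⁻¹ else 1))
        = fun _ => (1:K) := by
      funext a; split <;> simp [mul_inv_cancel₀ hd]
    rw [this, Matrix.diagonal_one]
  · intro i j h
    exact Matrix.diagonal_apply_ne _ (Ne.symm (ne_of_lt h))
  · intro i j h
    exact Matrix.diagonal_apply_ne _ (Ne.symm (ne_of_lt h))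
  · ext a b
    simp [Matrix.diagonal_mul, Matrix.mul_diagonal, mul_assoc]

/-- the first `t` columns are reduced: each is zero or a standard basis vector,
with distinct pivot rows -/
def Red (C : Matrix (Fin N) (Fin N) K) (t : ℕ) : Prop :=
  (∀ k : Fin N, (k : ℕ) < t → ∀ i, C i k = 0 ∨ C i k = 1) ∧
  (∀ k : Fin N, (k : ℕ) < t → ∀ i₁ i₂, C i₁ k ≠ 0 → C i₂ k ≠ 0 → i₁ = i₂) ∧
  (∀ (i k₁ k₂ : Fin N), (k₁ : ℕ) < t → (k₂ : ℕ) < t → C i k₁ ≠ 0 → C i k₂ ≠ 0 → k₁ = k₂)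

lemma red_step {C : Matrix (Fin N) (Fin N) K} (hC : IsStrictlyUpperTriangular C)
    (h2 : C * C = 0) (j : Fin N) (hR : Red C j.1) :
    ∃ C', ConjUT C C' ∧ IsStrictlyUpperTriangular C' ∧ Red C' (j.1 + 1) := by
  classical
  -- Phase 1: clear the entries of column j lying in pivot rows
  set w : Fin N → K := fun k => if (k : ℕ) < (j : ℕ) then -(∑ i, C i k * C i j) else 0 with hw_def
  have hw : ∀ a, w a ≠ 0 → a < j := by
    intro a ha
    rw [Fin.lt_def]
    by_contra h
    exact ha (by simp only [hw_def]; rw [if_neg h])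
  set C₁ : Matrix (Fin N) (Fin N) K := Matrix.of fun a b =>
    C a b + (∑ c, C a c * w c) * (if b = j then 1 else 0) - w a * C j b with hC₁
  have hconj1 : ConjUT C C₁ := conj_step C hC w j hw
  have hcols1 : ∀ k : Fin N, (k : ℕ) < j.1 → ∀ a, C₁ a k = C a k := by
    intro k hk a
    have hkj : k ≠ j := by
      intro e; rw [e] at hk; omega
    have hjk : C j k = 0 := hC j k (by rw [Fin.le_def]; omega)
    simp [hC₁, hkj, hjk]
  have hSUT1 : IsStrictlyUpperTriangular C₁ := by
    intro a b hba
    rw [Fin.le_def] at hba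
    have h1 : C a b = 0 := hC a b (by rw [Fin.le_def]; omega)
    have h2' : (∑ c, C a c * w c) * (if b = j then (1:K) else 0) = 0 := by
      by_cases hbj : b = j
      · subst hbj
        have : ∀ c : Fin N, C a c * w c = 0 := by
          intro c
          by_cases hc : w c = 0
          · rw [hc, mul_zero]
          · have hcb : (c : ℕ) < (b : ℕ) := hw c hc
            rw [hC a c (by rw [Fin.le_def]; omega), zero_mul]
        rw [Finset.sum_eq_zero (fun c _ => this c)]
        simp
      · simp [hbj]
    have h3 : w a * C j b = 0 := by
      by_cases hwa : w a = 0
      · rw [hwa, zero_mul]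
      · have haj : (a : ℕ) < (j : ℕ) := hw a hwa
        rw [hC j b (by rw [Fin.le_def]; omega), mul_zero]
    simp only [hC₁, Matrix.of_apply]
    rw [h1, h2', h3, zero_add, sub_zero]
  have hcolj1 : ∀ a, C₁ a j = C a j + ∑ c, C a c * w c := by
    intro a
    simp [hC₁, hC j j le_rfl]
  have hpivotclear : ∀ a, (∃ k : Fin N, (k : ℕ) < j.1 ∧ C a k ≠ 0) → C₁ a j = 0 := by
    rintro a ⟨k₀, hk₀, hak₀⟩
    have hak₀1 : C a k₀ = 1 := (hR.1 k₀ hk₀ a).resolve_left hak₀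
    have hsum : ∑ c, C a c * w c = w k₀ := by
      rw [Finset.sum_eq_single k₀]
      · rw [hak₀1, one_mul]
      · intro c _ hck
        by_cases hc : (c : ℕ) < (j : ℕ)
        · have : C a c = 0 := by
            by_contra hne
            exact hck (hR.2.2 a c k₀ hc hk₀ hne hak₀)
          rw [this, zero_mul]
        · have : w c = 0 := by simp only [hw_def]; rw [if_neg hc]
          rw [this, mul_zero]
      · intro h; exact absurd (Finset.mem_univ k₀) h
    have hwk₀ : w k₀ = -(C a j) := by
      rw [hw_def]
      simp only [if_pos hk₀]
      congr 1
      rw [Finset.sum_eq_single a]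
      · rw [hak₀1, one_mul]
      · intro i _ hia
        have : C i k₀ = 0 := by
          by_contra hne
          exact hia (hR.2.1 k₀ hk₀ i a hne hak₀)
        rw [this, zero_mul]
      · intro h; exact absurd (Finset.mem_univ a) h
    rw [hcolj1, hsum, hwk₀]
    ring
  have hnonpivot : ∀ a, (∀ k : Fin N, (k : ℕ) < j.1 → C a k = 0) → C₁ a j = C a j := by
    intro a ha
    rw [hcolj1]
    have : ∀ c : Fin N, C a c * w c = 0 := by
      intro c
      by_cases hc : (c : ℕ) < (j : ℕ)
      · rw [ha c hc, zero_mul]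
      · have : w c = 0 := by simp only [hw_def]; rw [if_neg hc]
        rw [this, mul_zero]
    rw [Finset.sum_eq_zero (fun c _ => this c), add_zero]
  have hRed1 : Red C₁ j.1 := by
    refine ⟨fun k hk i => ?_, fun k hk i₁ i₂ h1 h2 => ?_, fun i k₁ k₂ hk₁ hk₂ h1 h2 => ?_⟩
    · rw [hcols1 k hk]; exact hR.1 k hk i
    · rw [hcols1 k hk] at h1 h2; exact hR.2.1 k hk i₁ i₂ h1 h2
    · rw [hcols1 k₁ hk₁] at h1; rw [hcols1 k₂ hk₂] at h2
      exact hR.2.2 i k₁ k₂ hk₁ hk₂ h1 h2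
  by_cases hz : ∀ a, C₁ a j = 0
  · refine ⟨C₁, hconj1, hSUT1, ?_, ?_, ?_⟩
    · intro k hk i
      rcases Nat.lt_succ_iff_lt_or_eq.mp hk with h | h
      · exact hRed1.1 k h i
      · have : k = j := Fin.ext h
        subst this
        left; exact hz i
    · intro k hk i₁ i₂ h1 h2
      rcases Nat.lt_succ_iff_lt_or_eq.mp hk with h | h
      · exact hRed1.2.1 k h i₁ i₂ h1 h2
      · have : k = j := Fin.ext h
        subst this
        exact absurd (hz i₁) h1
    · intro i k₁ k₂ hk₁ hk₂ h1 h2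
      rcases Nat.lt_succ_iff_lt_or_eq.mp hk₁ with ha | ha
      · rcases Nat.lt_succ_iff_lt_or_eq.mp hk₂ with hb | hb
        · exact hRed1.2.2 i k₁ k₂ ha hb h1 h2
        · have : k₂ = j := Fin.ext hb
          subst this
          exact absurd (hz i) h2
      · have : k₁ = j := Fin.ext ha
        subst this
        exact absurd (hz i) h1
  · push_neg at hz
    set s : Finset (Fin N) := Finset.univ.filter (fun a => C₁ a j ≠ 0) with hs_def
    have hs : s.Nonempty := by
      obtain ⟨a, ha⟩ := hz
      exact ⟨a, by simp [hs_def, ha]⟩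
    set i := s.max' hs with hi_def
    have hi : C₁ i j ≠ 0 := (Finset.mem_filter.mp (s.max'_mem hs)).2
    have hmax : ∀ a, C₁ a j ≠ 0 → a ≤ i := by
      intro a ha
      exact s.le_max' a (by simp [hs_def, ha])
    have hij : i < j := by
      by_contra h
      push_neg at h
      exact hi (hSUT1 i j h)
    have hstar : ∀ a, C₁ a j ≠ 0 → ∀ k : Fin N, (k : ℕ) < j.1 → C₁ a k = 0 := by
      intro a ha k hk
      rw [hcols1 k hk]
      by_contra hne
      exact ha (hpivotclear a ⟨k, hk, hne⟩)
    have h2₁ : C₁ * C₁ = 0 := hconj1.sq h2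
    have hKEY : ∀ a, C₁ a j ≠ 0 → ∀ r, C₁ r a = 0 := by
      intro a ha r
      by_contra hra
      have haj : (a : ℕ) < (j : ℕ) := by
        by_contra h
        push_neg at h
        exact ha (hSUT1 a j (by rw [Fin.le_def]; omega))
      have hzero : (0 : K) = ∑ t, C₁ r t * C₁ t j := by
        rw [← Matrix.mul_apply, h2₁]
        simp
      have hone : ∑ t, C₁ r t * C₁ t j = C₁ r a * C₁ a j := by
        rw [Finset.sum_eq_single a]
        · intro t _ hta
          rcases lt_trichotomy (t : ℕ) (j : ℕ) with h | h | h
          · by_cases hrt : C₁ r t = 0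
            · rw [hrt, zero_mul]
            · exact absurd (hRed1.2.2 r t a h haj hrt hra) hta
          · have : t = j := Fin.ext h
            subst this
            have : C₁ r t = 0 := by
              by_contra h'
              exact hra (hstar r h' a haj)
            rw [this, zero_mul]
          · rw [hSUT1 t j (by rw [Fin.le_def]; omega), mul_zero]
        · intro h; exact absurd (Finset.mem_univ a) h
      exact mul_ne_zero hra ha (by rw [← hone, ← hzero])
    -- Phase 2: rescale so that the pivot entry is 1
    set d := C₁ i j with hd_def
    set C₂ : Matrix (Fin N) (Fin N) K := Matrix.of fun a b =>
      (if a = j then d else 1) * C₁ a b * (if b = j then d⁻¹ else 1) with hC₂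
    have hconj2 : ConjUT C₁ C₂ := conj_diag C₁ j d hi
    have hpat2 : ∀ a b, C₂ a b = 0 ↔ C₁ a b = 0 := by
      intro a b
      have hu : (if a = j then d else 1) ≠ 0 := by split <;> simp [hi]
      have hv : (if b = j then d⁻¹ else 1) ≠ 0 := by split <;> simp [inv_ne_zero hi]
      have he : C₂ a b = (if a = j then d else 1) * C₁ a b * (if b = j then d⁻¹ else 1) := rfl
      rw [he, mul_eq_zero, mul_eq_zero]
      constructor
      · rintro ((h | h) | h)
        · exact absurd h hu
        · exact h
        · exact absurd h hv
      · intro h; exact Or.inl (Or.inr h)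
    have hSUT2 : IsStrictlyUpperTriangular C₂ := by
      intro a b h
      simp [hC₂, hSUT1 a b h]
    have hcols2 : ∀ k : Fin N, (k : ℕ) < j.1 → ∀ a, C₂ a k = C₁ a k := by
      intro k hk a
      have hkj : k ≠ j := by intro e; rw [e] at hk; omega
      by_cases haj : a = j
      · subst haj
        rw [hSUT1 a k (by rw [Fin.le_def]; omega)]
        rw [(hpat2 a k).2 (hSUT1 a k (by rw [Fin.le_def]; omega))]
      · simp [hC₂, hkj, haj]
    have hij' : i ≠ j := ne_of_lt hij
    have hC₂ij : C₂ i j = 1 := by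
      simp [hC₂, hij', mul_inv_cancel₀ hi]
      exact mul_inv_cancel₀ hi
    have hrowi2 : ∀ k : Fin N, (k : ℕ) < j.1 → C₂ i k = 0 := by
      intro k hk
      rw [hcols2 k hk]
      exact hstar i hi k hk
    have hmax2 : ∀ a, C₂ a j ≠ 0 → a ≤ i := by
      intro a ha
      exact hmax a (fun h => ha ((hpat2 a j).2 h))
    have hKEY2 : ∀ a, C₂ a j ≠ 0 → ∀ r, C₂ r a = 0 := by
      intro a ha r
      exact (hpat2 r a).2 (hKEY a (fun h => ha ((hpat2 a j).2 h)) r)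
    have hRed2 : Red C₂ j.1 := by
      refine ⟨fun k hk a => ?_, fun k hk i₁ i₂ u1 u2 => ?_, fun a k₁ k₂ hk₁ hk₂ u1 u2 => ?_⟩
      · rw [hcols2 k hk]; exact hRed1.1 k hk a
      · rw [hcols2 k hk] at u1 u2; exact hRed1.2.1 k hk i₁ i₂ u1 u2
      · rw [hcols2 k₁ hk₁] at u1; rw [hcols2 k₂ hk₂] at u2
        exact hRed1.2.2 a k₁ k₂ hk₁ hk₂ u1 u2
    -- Phase 3: clear the remaining entries of column j
    set w' : Fin N → K := fun a => if a = i then 0 else C₂ a j with hw'_def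
    have hw' : ∀ a, w' a ≠ 0 → a < i := by
      intro a ha
      have hai : a ≠ i := by
        intro e; subst e; simp [hw'_def] at ha
      have haj : C₂ a j ≠ 0 := by
        intro e; apply ha; simp [hw'_def, hai, e]
      exact lt_of_le_of_ne (hmax2 a haj) hai
    set C₃ : Matrix (Fin N) (Fin N) K := Matrix.of fun a b =>
      C₂ a b + (∑ c, C₂ a c * w' c) * (if b = i then 1 else 0) - w' a * C₂ i b with hC₃def
    have hconj3 : ConjUT C₂ C₃ := conj_step C₂ hSUT2 w' i hw'
    have hsum0 : ∀ a, (∑ c, C₂ a c * w' c) = 0 := by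
      intro a
      apply Finset.sum_eq_zero
      intro c _
      by_cases hc : w' c = 0
      · rw [hc, mul_zero]
      · have hcj : C₂ c j ≠ 0 := by
          intro e
          apply hc
          simp only [hw'_def]
          split
          · rfl
          · exact e
        rw [hKEY2 c hcj a, zero_mul]
    have hC₃ : ∀ a b, C₃ a b = C₂ a b - w' a * C₂ i b := by
      intro a b
      simp [hC₃def, hsum0]
    have hSUT3 : IsStrictlyUpperTriangular C₃ := by
      intro a b h
      rw [hC₃ a b, hSUT2 a b h]
      rw [Fin.le_def] at h
      by_cases hwa : w' a = 0
      · rw [hwa, zero_mul, sub_zero]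
      · have : (a : ℕ) < (i : ℕ) := hw' a hwa
        rw [hSUT2 i b (by rw [Fin.le_def]; omega), mul_zero, sub_zero]
    have hcols3 : ∀ k : Fin N, (k : ℕ) < j.1 → ∀ a, C₃ a k = C₂ a k := by
      intro k hk a
      rw [hC₃ a k, hrowi2 k hk, mul_zero, sub_zero]
    have hcolj3 : ∀ a, C₃ a j = if a = i then 1 else 0 := by
      intro a
      rw [hC₃ a j, hC₂ij, mul_one]
      simp only [hw'_def]
      by_cases hai : a = i
      · subst hai
        simp [hC₂ij]
      · simp [hai]
    refine ⟨C₃, hconj1.trans (hconj2.trans hconj3), hSUT3, ?_, ?_, ?_⟩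
    · intro k hk a
      rcases Nat.lt_succ_iff_lt_or_eq.mp hk with h | h
      · rw [hcols3 k h]; exact hRed2.1 k h a
      · have : k = j := Fin.ext h
        subst this
        rw [hcolj3]
        split
        · right; rfl
        · left; rfl
    · intro k hk i₁ i₂ u1 u2
      rcases Nat.lt_succ_iff_lt_or_eq.mp hk with h | h
      · rw [hcols3 k h] at u1 u2; exact hRed2.2.1 k h i₁ i₂ u1 u2
      · have : k = j := Fin.ext h
        subst this
        rw [hcolj3] at u1 u2
        have e1 : i₁ = i := by by_contra h'; rw [if_neg h'] at u1; exact u1 rfl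
        have e2 : i₂ = i := by by_contra h'; rw [if_neg h'] at u2; exact u2 rfl
        rw [e1, e2]
    · intro a k₁ k₂ hk₁ hk₂ u1 u2
      rcases Nat.lt_succ_iff_lt_or_eq.mp hk₁ with h | h
      · rcases Nat.lt_succ_iff_lt_or_eq.mp hk₂ with h' | h'
        · rw [hcols3 k₁ h] at u1; rw [hcols3 k₂ h'] at u2
          exact hRed2.2.2 a k₁ k₂ h h' u1 u2
        · have : k₂ = j := Fin.ext h'
          subst this
          rw [hcolj3] at u2
          have e2 : a = i := by by_contra h''; rw [if_neg h''] at u2; exact u2 rfl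
          subst e2
          rw [hcols3 k₁ h] at u1
          exact absurd (hrowi2 k₁ h) u1
      · have : k₁ = j := Fin.ext h
        subst this
        rcases Nat.lt_succ_iff_lt_or_eq.mp hk₂ with h' | h'
        · rw [hcolj3] at u1
          have e1 : a = i := by by_contra h''; rw [if_neg h''] at u1; exact u1 rfl
          subst e1
          rw [hcols3 k₂ h'] at u2
          exact absurd (hrowi2 k₂ h') u2
        · exact Fin.ext (by omega)


lemma exists_red (B : Matrix (Fin N) (Fin N) K) (hB : IsStrictlyUpperTriangular B)
    (h2 : B * B = 0) :
    ∀ t : ℕ, t ≤ N → ∃ C, ConjUT B C ∧ IsStrictlyUpperTriangular C ∧ Red C t := by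
  intro t
  induction t with
  | zero =>
    intro _
    exact ⟨B, ConjUT.refl B, hB, fun k hk => by omega, fun k hk => by omega,
      fun i k₁ k₂ hk₁ => by omega⟩
  | succ t ih =>
    intro ht
    obtain ⟨C, hconj, hsut, hred⟩ := ih (by omega)
    obtain ⟨C', hconj', hsut', hred'⟩ := red_step hsut (hconj.sq h2) ⟨t, by omega⟩ hred
    exact ⟨C', hconj.trans hconj', hsut', hred'⟩

lemma red_to_pm (C : Matrix (Fin N) (Fin N) K) (h : Red C N) : IsPartialMatching C :=
  ⟨fun i j => h.1 j j.isLt i, fun i j₁ j₂ => h.2.2 i j₁ j₂ j₁.isLt j₂.isLt,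
   fun i₁ i₂ j => h.2.1 j j.isLt i₁ i₂⟩

lemma exists_decomp (B : Matrix (Fin N) (Fin N) K) (hB : IsStrictlyUpperTriangular B)
    (h2 : B * B = 0) :
    ∃ U : Matrix (Fin N) (Fin N) K, IsUnit U ∧ IsUpperTriangularMat U ∧
      IsUpperTriangularMat U⁻¹ ∧ IsStrictlyUpperTriangular (U⁻¹ * B * U) ∧
      IsPartialMatching (U⁻¹ * B * U) := by
  obtain ⟨C, hC, hsut, hred⟩ := exists_red B hB h2 N le_rfl
  obtain ⟨U, V, hUV, hVU, hU, hV, rfl⟩ := hC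
  have hunit : IsUnit U := ⟨⟨U, V, hUV, hVU⟩, rfl⟩
  have hinv : U⁻¹ = V := Matrix.inv_eq_right_inv hUV
  rw [← hinv] at hV hsut hred
  exact ⟨U, hunit, hU, hV, hsut, red_to_pm _ hred⟩

/-- generic interval submatrix -/
def ivl {α : Type*} {N : ℕ} (M : Matrix (Fin N) (Fin N) α) (m n : ℕ) (hn : n ≤ N) :
    Matrix (Fin (n - m)) (Fin (n - m)) α :=
  fun i j => M ⟨m + i.1, by have := i.2; omega⟩ ⟨m + j.1, by have := j.2; omega⟩

lemma sum_ivl {m n : ℕ} (hn : n ≤ N) (g : Fin N → K)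
    (h0 : ∀ k : Fin N, ((k : ℕ) < m ∨ n ≤ (k : ℕ)) → g k = 0) :
    ∑ k, g k = ∑ x : Fin (n - m), g ⟨m + x.1, by have := x.2; omega⟩ := by
  classical
  set f : Fin (n - m) → Fin N := fun x => ⟨m + x.1, by have := x.2; omega⟩ with hf
  have hinj : Function.Injective f := by
    intro x y h
    have : m + x.1 = m + y.1 := congrArg Fin.val h
    exact Fin.ext (by omega)
  have h1 : ∑ k, g k = ∑ k ∈ Finset.univ.image f, g k := by
    symm
    apply Finset.sum_subset (Finset.subset_univ _)
    intro x _ hx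
    apply h0
    by_contra h
    push_neg at h
    exact hx (Finset.mem_image.mpr ⟨⟨x.1 - m, by omega⟩, Finset.mem_univ _,
      Fin.ext (by show m + (x.1 - m) = x.1; omega)⟩)
  rw [h1, Finset.sum_image (fun x _ y _ h => hinj h)]

lemma sut_ut_mul {U B : Matrix (Fin N) (Fin N) K} (hU : IsUpperTriangularMat U)
    (hB : IsStrictlyUpperTriangular B) : IsStrictlyUpperTriangular (U * B) := by
  intro a b h
  rw [Matrix.mul_apply]
  apply Finset.sum_eq_zero
  intro c _
  by_cases hc : c < a
  · rw [hU a c hc, zero_mul]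
  · push_neg at hc
    rw [hB c b (le_trans h hc), mul_zero]

lemma ivl_mul_mul {m n : ℕ} (hn : n ≤ N) (V B U : Matrix (Fin N) (Fin N) K)
    (hV : IsUpperTriangularMat V) (hB : IsStrictlyUpperTriangular B)
    (hU : IsUpperTriangularMat U) :
    ivl (V * B * U) m n hn = ivl V m n hn * ivl B m n hn * ivl U m n hn := by
  have hVB : IsStrictlyUpperTriangular (V * B) := sut_ut_mul hV hB
  ext i j
  show (V * B * U) _ _ = _
  rw [Matrix.mul_apply]
  rw [sum_ivl hn _ (fun l hl => ?_)]
  · rw [Matrix.mul_apply (M := ivl V m n hn * ivl B m n hn)]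
    apply Finset.sum_congr rfl
    intro l _
    rw [Matrix.mul_apply]
    rw [sum_ivl hn _ (fun k hk => ?_)]
    · rw [Matrix.mul_apply]
      rfl
    · rcases hk with hk | hk
      · rw [hV _ k (by rw [Fin.lt_def]; simp; omega), zero_mul]
      · rw [hB k _ (by rw [Fin.le_def]; simp; omega), mul_zero]
  · rcases hl with hl | hl
    · rw [hVB _ l (by rw [Fin.le_def]; simp; omega), zero_mul]
    · rw [hU l _ (by rw [Fin.lt_def]; simp; omega), mul_zero]

lemma ivl_ut {m n : ℕ} (hn : n ≤ N) (U : Matrix (Fin N) (Fin N) K)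
    (hU : IsUpperTriangularMat U) : IsUpperTriangularMat (ivl U m n hn) := by
  intro i j h
  exact hU _ _ (by rw [Fin.lt_def]; simp; rw [Fin.lt_def] at h; omega)

lemma ivl_det_isUnit {m n : ℕ} (hn : n ≤ N) (U : Matrix (Fin N) (Fin N) K)
    (hU : IsUpperTriangularMat U) (hdet : U.det ≠ 0) : IsUnit (ivl U m n hn).det := by
  have hbt : U.BlockTriangular id := fun i j h => hU i j h
  have hdiag : ∀ a, U a a ≠ 0 := by
    rw [Matrix.det_of_upperTriangular hbt] at hdet
    intro a
    exact Finset.prod_ne_zero_iff.mp hdet a (Finset.mem_univ a)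
  have hbt' : (ivl U m n hn).BlockTriangular id := fun i j h => ivl_ut hn U hU i j h
  rw [isUnit_iff_ne_zero, Matrix.det_of_upperTriangular hbt']
  exact Finset.prod_ne_zero_iff.mpr (fun x _ => hdiag _)

lemma rank_ivl_conj {m n : ℕ} (hn : n ≤ N) (B U V : Matrix (Fin N) (Fin N) K)
    (hUV : U * V = 1) (hU : IsUpperTriangularMat U) (hV : IsUpperTriangularMat V)
    (hB : IsStrictlyUpperTriangular B) :
    (ivl (V * B * U) m n hn).rank = (ivl B m n hn).rank := by
  have hdet : U.det * V.det = 1 := by rw [← Matrix.det_mul, hUV, Matrix.det_one]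
  have hdU : U.det ≠ 0 := fun h => by simp [h] at hdet
  have hdV : V.det ≠ 0 := fun h => by simp [h] at hdet
  rw [ivl_mul_mul hn V B U hV hB hU]
  rw [Matrix.rank_mul_eq_left_of_isUnit_det _ _ (ivl_det_isUnit hn U hU hdU)]
  rw [Matrix.rank_mul_eq_right_of_isUnit_det _ _ (ivl_det_isUnit hn V hV hdV)]

lemma pm_ivl {m n : ℕ} (hn : n ≤ N) (C : Matrix (Fin N) (Fin N) K)
    (hC : IsPartialMatching C) : IsPartialMatching (ivl C m n hn) := by
  refine ⟨fun i j => hC.1 _ _, fun i j₁ j₂ h1 h2 => ?_, fun i₁ i₂ j h1 h2 => ?_⟩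
  · have := hC.2.1 _ _ _ h1 h2
    have := congrArg Fin.val this
    simp at this
    exact Fin.ext (by omega)
  · have := hC.2.2 _ _ _ h1 h2
    have := congrArg Fin.val this
    simp at this
    exact Fin.ext (by omega)

open Module in
lemma rank_pm {a : ℕ} (M : Matrix (Fin a) (Fin a) K) (hM : IsPartialMatching M) :
    M.rank = Nat.card {j : Fin a // ∃ i, M i j ≠ 0} := by
  classical
  set P := {j : Fin a // ∃ i, M i j ≠ 0} with hP
  have piv : ∀ j : P, {i : Fin a // M i j.1 ≠ 0} := fun j => ⟨j.2.choose, j.2.choose_spec⟩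
  set pv : P → Fin a := fun j => (piv j).1 with hpv
  have hcol : ∀ j : P, (Mᵀ j.1) = Pi.single (pv j) (1 : K) := by
    intro j
    funext i
    rw [Matrix.transpose_apply, Pi.single_apply]
    by_cases h : i = pv j
    · subst h
      rw [if_pos rfl]
      exact (hM.1 (pv j) j.1).resolve_left (piv j).2
    · rw [if_neg h]
      by_contra hne
      exact h (hM.2.2 i (pv j) j.1 hne (piv j).2)
  have hpvinj : Function.Injective pv := by
    intro j₁ j₂ h
    have h1 : M (pv j₁) j₁.1 ≠ 0 := (piv j₁).2
    have h2 : M (pv j₁) j₂.1 ≠ 0 := by rw [h]; exact (piv j₂).2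
    exact Subtype.ext (hM.2.1 (pv j₁) j₁.1 j₂.1 h1 h2)
  have hli : LinearIndependent K (fun j : P => Mᵀ j.1) := by
    rw [show (fun j : P => Mᵀ j.1) = fun j : P => Pi.single (pv j) (1:K) from funext hcol]
    rw [Fintype.linearIndependent_iff]
    intro g hg j₀
    have := congrFun hg (pv j₀)
    rw [Finset.sum_apply] at this
    rw [Finset.sum_eq_single j₀] at this
    · simpa using this
    · intro j _ hj
      have : pv j ≠ pv j₀ := fun h => hj (hpvinj h)
      simp [Pi.single_apply, this]
    · intro h; exact absurd (Finset.mem_univ j₀) h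
  have hspan : Submodule.span K (Set.range Mᵀ)
      = Submodule.span K (Set.range (fun j : P => Mᵀ j.1)) := by
    apply le_antisymm
    · rw [Submodule.span_le]
      rintro x ⟨j, rfl⟩
      by_cases h : ∃ i, M i j ≠ 0
      · exact Submodule.subset_span ⟨⟨j, h⟩, rfl⟩
      · push_neg at h
        have : Mᵀ j = 0 := by
          funext i
          exact h i
        rw [this]
        exact Submodule.zero_mem _
    · rw [Submodule.span_le]
      rintro x ⟨j, rfl⟩
      exact Submodule.subset_span ⟨j.1, rfl⟩
  rw [Matrix.rank_eq_finrank_span_cols]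
  show finrank K ↥(Submodule.span K (Set.range Mᵀ)) = _
  rw [hspan, finrank_span_eq_card hli,
    Nat.card_eq_fintype_card]

end PMForm

/-- the inclusion of interval indices -/
def finIvl {N m n : ℕ} (hn : n ≤ N) (i : Fin (n - m)) : Fin N :=
  ⟨m + i.1, by have := i.2; omega⟩

/-- number of points of `S` in the open-closed interval box, defined independently of
any field -/
noncomputable def cntS {N : ℕ} (S : Set (Fin N × Fin N)) (m n : ℕ) (hn : n ≤ N) : ℕ :=
  Nat.card {j : Fin (n - m) // ∃ i : Fin (n - m), (finIvl hn i, finIvl hn j) ∈ S}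

namespace PMForm

variable {K : Type*} [Field K] {N : ℕ}

lemma rank_ivl_eq_cnt (B' : Matrix (Fin N) (Fin N) K)
    (hB' : IsStrictlyUpperTriangular B') (h2 : B' * B' = 0) (S : Set (Fin N × Fin N))
    (hsupp : ∀ U : Matrix (Fin N) (Fin N) K, IsUnit U → IsUpperTriangularMat U →
      IsStrictlyUpperTriangular (U⁻¹ * B' * U) → IsPartialMatching (U⁻¹ * B' * U) →
      {p : Fin N × Fin N | (U⁻¹ * B' * U) p.1 p.2 ≠ 0} = S)
    (m n : ℕ) (hn : n ≤ N) : (ivl B' m n hn).rank = cntS S m n hn := by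
  obtain ⟨U, hunit, hU, hUinv, hsut, hpm⟩ := exists_decomp B' hB' h2
  have hS := hsupp U hunit hU hsut hpm
  have hUV : U * U⁻¹ = 1 := Matrix.mul_nonsing_inv U ((Matrix.isUnit_iff_isUnit_det U).mp hunit)
  have hr := rank_ivl_conj (m := m) hn B' U U⁻¹ hUV hU hUinv hB'
  rw [← hr, rank_pm _ (pm_ivl hn _ hpm), cntS]
  apply Nat.card_congr (Equiv.subtypeEquivRight _)
  intro j
  constructor
  · rintro ⟨i, hi⟩
    refine ⟨i, ?_⟩
    rw [← hS]
    exact hi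
  · rintro ⟨i, hi⟩
    refine ⟨i, ?_⟩
    rw [← hS] at hi
    exact hi

end PMForm

section PartB

open Module

lemma mulVec_cast {R : Type*} [CommRing R] {k : ℕ} (T : Matrix (Fin k) (Fin k) ℤ)
    (y : Fin k → ℤ) :
    (T.map (Int.cast : ℤ → R)).mulVec (fun i => ((y i : R))) =
      fun i => ((T.mulVec y i : ℤ) : R) := by
  funext j
  simp only [Matrix.mulVec, dotProduct, Matrix.map_apply]
  rw [Int.cast_sum]
  exact Finset.sum_congr rfl fun i _ => by push_cast; ring

/-- coordinatewise cast `ℤ^k → ℚ^k` as a `ℤ`-linear map -/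
def castLinQ {k : ℕ} : (Fin k → ℤ) →ₗ[ℤ] (Fin k → ℚ) where
  toFun y := fun i => (y i : ℚ)
  map_add' x y := by funext i; simp
  map_smul' c x := by funext i; simp

lemma castLinQ_inj {k : ℕ} : Function.Injective (castLinQ (k := k)) := by
  intro x y h
  funext t
  exact Int.cast_injective (congrFun h t)

set_option maxHeartbeats 2000000 in
open Module in
lemma free_of_rank_eq {k : ℕ} (T : Matrix (Fin k) (Fin k) ℤ)
    (hrk : ∀ (p : ℕ), p.Prime →
      (T.map (Int.cast : ℤ → ZMod p)).rank = (T.map (Int.cast : ℤ → ℚ)).rank) :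
    Module.Free ℤ (matrixHomology T) := by
  classical
  obtain ⟨d, v⟩ : Σ n, Basis (Fin n) ℤ ↥(LinearMap.ker T.mulVecLin) :=
    Module.basisOfFiniteTypeTorsionFree'
  set TQ := (T.map (Int.cast : ℤ → ℚ)) with hTQ
  set vQ : Fin d → (Fin k → ℚ) := fun i => fun t => (((v i : Fin k → ℤ)) t : ℚ) with hvQ
  have hvker : ∀ i : Fin d, T.mulVec ((v i : Fin k → ℤ)) = 0 := by
    intro i
    have := LinearMap.mem_ker.mp (v i).2
    rwa [Matrix.mulVecLin_apply] at this
  -- ℚ-linear independence of the casted basis of the integer kernel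
  have hvQli : LinearIndependent ℚ vQ := by
    have hli0 : LinearIndependent ℤ (fun i : Fin d => ((v i : Fin k → ℤ))) :=
      v.linearIndependent.map' (LinearMap.ker T.mulVecLin).subtype (Submodule.ker_subtype _)
    have hli1 : LinearIndependent ℤ vQ :=
      hli0.map' castLinQ (LinearMap.ker_eq_bot.mpr castLinQ_inj)
    exact (LinearIndependent.iff_fractionRing ℤ ℚ).mp hli1
  -- the rational kernel is spanned by the casted integral kernel basis
  have hspanQ : LinearMap.ker TQ.mulVecLin = Submodule.span ℚ (Set.range vQ) := by
    apply le_antisymm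
    · intro x hx
      rw [LinearMap.mem_ker, Matrix.mulVecLin_apply] at hx
      obtain ⟨c, hc⟩ := IsLocalization.exist_integer_multiples_of_finite
        (nonZeroDivisors ℤ) x
      choose y hy using hc
      have hc0 : ((c : ℤ) : ℚ) ≠ 0 := by
        rw [Int.cast_ne_zero]
        exact nonZeroDivisors.coe_ne_zero c
      have hyx : (fun t => (y t : ℚ)) = ((c : ℤ) : ℚ) • x := by
        funext t
        have := hy t
        rw [Algebra.smul_def] at this
        simpa using this
      have hyK : T.mulVec y = 0 := by
        have h1 := mulVec_cast (R := ℚ) T y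
        rw [hyx, Matrix.mulVec_smul, hx, smul_zero] at h1
        funext t
        have h2 := congrFun h1.symm t
        rw [Pi.zero_apply] at h2 ⊢
        exact_mod_cast h2
      have hymem : y ∈ LinearMap.ker T.mulVecLin := by
        rw [LinearMap.mem_ker, Matrix.mulVecLin_apply]
        exact hyK
      have hxeq : x = (((c : ℤ) : ℚ))⁻¹ • (fun t => (y t : ℚ)) := by
        rw [hyx, smul_smul, inv_mul_cancel₀ hc0, one_smul]
      have hyspan : (fun t => (y t : ℚ))
          = ∑ i, ((v.repr ⟨y, hymem⟩ i : ℤ) : ℚ) • vQ i := by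
        have hsr : (∑ i, v.repr ⟨y, hymem⟩ i • v i) = (⟨y, hymem⟩ : LinearMap.ker T.mulVecLin) :=
          v.sum_repr _
        have hsr2 : (∑ i, v.repr ⟨y, hymem⟩ i • (v i : Fin k → ℤ)) = y := by
          have h2 := congrArg (Subtype.val) hsr
          rw [Submodule.coe_sum] at h2
          simp only [SetLike.val_smul] at h2
          exact h2
        funext t
        have h3 := congrFun hsr2 t
        rw [← h3, Finset.sum_apply, Int.cast_sum, Finset.sum_apply]
        apply Finset.sum_congr rfl
        intro i _
        simp only [Pi.smul_apply, smul_eq_mul, hvQ]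
        push_cast
        ring
      rw [hxeq, hyspan]
      apply Submodule.smul_mem
      exact Submodule.sum_mem _ (fun i _ =>
        Submodule.smul_mem _ _ (Submodule.subset_span ⟨i, rfl⟩))
    · rw [Submodule.span_le]
      rintro _ ⟨i, rfl⟩
      rw [SetLike.mem_coe, LinearMap.mem_ker, Matrix.mulVecLin_apply]
      rw [show vQ i = fun t => (((v i : Fin k → ℤ) t : ℚ)) from rfl, mulVec_cast,
        hvker i]
      funext t
      simp
  have hcardQ : finrank ℚ ↥(LinearMap.ker TQ.mulVecLin) = d := by
    rw [hspanQ, finrank_span_eq_card hvQli, Fintype.card_fin]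
  have hrankQ : TQ.rank + d = k := by
    have h := LinearMap.finrank_range_add_finrank_ker TQ.mulVecLin
    rw [hcardQ] at h
    rw [show TQ.rank = finrank ℚ ↥(LinearMap.range TQ.mulVecLin) from rfl, h]
    simp [Module.finrank_pi]
  -- the prime-by-prime saturation step
  have pstep : ∀ (p : ℕ), p.Prime → ∀ x : Fin k → ℤ,
      (p : ℤ) • x ∈ LinearMap.range T.mulVecLin → x ∈ LinearMap.range T.mulVecLin := by
    intro p hp x hx
    haveI : Fact p.Prime := ⟨hp⟩
    have hp0 : (p : ℤ) ≠ 0 := by exact_mod_cast hp.ne_zero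
    set TP := (T.map (Int.cast : ℤ → ZMod p)) with hTP
    set vP : Fin d → (Fin k → ZMod p) := fun i => fun t => (((v i : Fin k → ℤ)) t : ZMod p)
      with hvP
    -- generic coordinate computation for integer combinations of the basis
    have hcoord : ∀ (aa : Fin d → ℤ) (t : Fin k),
        (((∑ i, aa i • v i : LinearMap.ker T.mulVecLin) : Fin k → ℤ) t : ZMod p)
          = ∑ i, ((aa i : ZMod p)) * vP i t := by
      intro aa t
      have h1 : ((∑ i, aa i • v i : LinearMap.ker T.mulVecLin) : Fin k → ℤ)
          = ∑ i, aa i • (v i : Fin k → ℤ) := by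
        rw [Submodule.coe_sum]
        simp only [SetLike.val_smul]
      rw [h1, Finset.sum_apply, Int.cast_sum]
      apply Finset.sum_congr rfl
      intro i _
      simp only [Pi.smul_apply, smul_eq_mul, hvP]
      push_cast
      ring
    -- the casted basis family is linearly independent over `ZMod p`
    have hliP : LinearIndependent (ZMod p) vP := by
      rw [Fintype.linearIndependent_iff]
      intro g hg i₀
      choose a ha using fun i => ZMod.intCast_surjective (g i)
      have hzcoord : ∀ t, (((∑ i, a i • v i : LinearMap.ker T.mulVecLin) : Fin k → ℤ) t
          : ZMod p) = 0 := by
        intro t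
        rw [hcoord a t]
        have := congrFun hg t
        rw [Finset.sum_apply, Pi.zero_apply] at this
        rw [← this]
        apply Finset.sum_congr rfl
        intro i _
        rw [← ha i]
        simp [smul_eq_mul]
      have hdvd : ∀ t, (p : ℤ) ∣ ((∑ i, a i • v i : LinearMap.ker T.mulVecLin)
          : Fin k → ℤ) t := fun t => (ZMod.intCast_zmod_eq_zero_iff_dvd _ p).mp (hzcoord t)
      set z : Fin k → ℤ := ((∑ i, a i • v i : LinearMap.ker T.mulVecLin) : Fin k → ℤ)
        with hz
      set w : Fin k → ℤ := fun t => z t / p with hw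
      have hzw : z = (p : ℤ) • w := by
        funext t
        rw [Pi.smul_apply, smul_eq_mul, hw]
        exact (Int.mul_ediv_cancel' (hdvd t)).symm
      have hwK : w ∈ LinearMap.ker T.mulVecLin := by
        rw [LinearMap.mem_ker, Matrix.mulVecLin_apply]
        have hzK : T.mulVec z = 0 := by
          have := LinearMap.mem_ker.mp (∑ i, a i • v i : LinearMap.ker T.mulVecLin).2
          rwa [Matrix.mulVecLin_apply] at this
        rw [hzw, Matrix.mulVec_smul] at hzK
        exact (smul_eq_zero.mp hzK).resolve_left hp0
      have hzsw : (∑ i, a i • v i : LinearMap.ker T.mulVecLin)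
          = (p : ℤ) • (⟨w, hwK⟩ : LinearMap.ker T.mulVecLin) := by
        apply Subtype.ext
        rw [SetLike.val_smul]
        exact hzw
      have hai : a i₀ = (p : ℤ) * (v.repr ⟨w, hwK⟩ i₀) := by
        have h4 : a i₀ = v.repr (∑ i, a i • v i) i₀ := by
          rw [v.repr_sum_self]
        rw [h4, hzsw, map_smul]
        simp [smul_eq_mul]
      rw [← ha i₀, hai]
      push_cast
      simp
    -- the kernel over `ZMod p` is spanned by the casted basis
    have hsubP : Submodule.span (ZMod p) (Set.range vP) ≤ LinearMap.ker TP.mulVecLin := by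
      rw [Submodule.span_le]
      rintro _ ⟨i, rfl⟩
      rw [SetLike.mem_coe, LinearMap.mem_ker, Matrix.mulVecLin_apply]
      rw [show vP i = fun t => (((v i : Fin k → ℤ) t : ZMod p)) from rfl, mulVec_cast,
        hvker i]
      funext t
      simp
    have hkerP : Submodule.span (ZMod p) (Set.range vP) = LinearMap.ker TP.mulVecLin := by
      apply Submodule.eq_of_le_of_finrank_le hsubP
      have h1 : finrank (ZMod p) ↥(Submodule.span (ZMod p) (Set.range vP)) = d := by
        rw [finrank_span_eq_card hliP, Fintype.card_fin]
      have h3 : finrank (ZMod p) (Fin k → ZMod p) = k := by simp [Module.finrank_pi]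
      have h4 : TP.rank = finrank (ZMod p) ↥(LinearMap.range TP.mulVecLin) := rfl
      have h2' : TP.rank + finrank (ZMod p) ↥(LinearMap.ker TP.mulVecLin) = k := by
        have h := LinearMap.finrank_range_add_finrank_ker TP.mulVecLin
        rw [h3] at h
        rw [h4]
        exact h
      have h5 : TP.rank = TQ.rank := hrk p hp
      rw [h1]
      omega
    -- now the saturation argument
    obtain ⟨y, hy⟩ := hx
    rw [Matrix.mulVecLin_apply] at hy
    have hyred : (fun t => ((y t : ZMod p))) ∈ LinearMap.ker TP.mulVecLin := by
      rw [LinearMap.mem_ker, Matrix.mulVecLin_apply, mulVec_cast, hy]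
      funext t
      rw [Pi.smul_apply, smul_eq_mul]
      push_cast
      simp
    rw [← hkerP] at hyred
    obtain ⟨g, hg⟩ := (Submodule.mem_span_range_iff_exists_fun (ZMod p)).mp hyred
    choose a ha using fun i => ZMod.intCast_surjective (g i)
    set z : Fin k → ℤ := ((∑ i, a i • v i : LinearMap.ker T.mulVecLin) : Fin k → ℤ) with hz
    have hzred : ∀ t, ((y t - z t : ℤ) : ZMod p) = 0 := by
      intro t
      push_cast
      rw [hz, hcoord a t]
      have := congrFun hg t
      rw [Finset.sum_apply] at this
      rw [show (∑ i, ((a i : ZMod p)) * vP i t) = ∑ i, (g i • vP i) t from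
        Finset.sum_congr rfl fun i _ => by rw [← ha i]; simp [smul_eq_mul], this]
      ring
    have hdvd : ∀ t, (p : ℤ) ∣ (y t - z t) :=
      fun t => (ZMod.intCast_zmod_eq_zero_iff_dvd _ p).mp (hzred t)
    set w : Fin k → ℤ := fun t => (y t - z t) / p with hw
    have hyzw : y = z + (p : ℤ) • w := by
      funext t
      rw [Pi.add_apply, Pi.smul_apply, smul_eq_mul]
      show y t = z t + (p : ℤ) * ((y t - z t) / (p : ℤ))
      rw [Int.mul_ediv_cancel' (hdvd t)]
      ring
    have hzK : T.mulVec z = 0 := by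
      have := LinearMap.mem_ker.mp (∑ i, a i • v i : LinearMap.ker T.mulVecLin).2
      rwa [Matrix.mulVecLin_apply] at this
    have hfin : (p : ℤ) • T.mulVec w = (p : ℤ) • x := by
      rw [← Matrix.mulVec_smul, ← hy, hyzw, Matrix.mulVec_add, hzK, zero_add]
    exact ⟨w, by rw [Matrix.mulVecLin_apply]; exact smul_right_injective _ hp0 hfin⟩
  -- saturation for arbitrary nonzero integers
  have sat : ∀ (c : ℤ), c ≠ 0 → ∀ x : Fin k → ℤ,
      c • x ∈ LinearMap.range T.mulVecLin → x ∈ LinearMap.range T.mulVecLin := by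
    have : ∀ (n : ℕ) (c : ℤ), c.natAbs = n → c ≠ 0 → ∀ x : Fin k → ℤ,
        c • x ∈ LinearMap.range T.mulVecLin → x ∈ LinearMap.range T.mulVecLin := by
      intro n
      induction n using Nat.strong_induction_on with
      | _ n ih =>
        intro c hcn hc0 x hx
        rcases eq_or_ne n 0 with h0 | h0
        · exact absurd (Int.natAbs_eq_zero.mp (hcn.trans h0)) hc0
        rcases eq_or_ne n 1 with h1 | h1
        · rcases Int.natAbs_eq_iff.mp (hcn.trans h1) with h | h
          · rw [h] at hx
            simpa using hx
          · rw [h] at hx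
            simpa using Submodule.neg_mem _ hx
        · have hn2 : 2 ≤ n := by omega
          set q := n.minFac with hq
          have hqp : q.Prime := Nat.minFac_prime h1
          have hqd : q ∣ n := Nat.minFac_dvd n
          have hdq : (q : ℤ) ∣ c := by
            have h' : (q : ℤ) ∣ (c.natAbs : ℤ) := Int.natCast_dvd_natCast.mpr (hcn ▸ hqd)
            exact Int.dvd_natAbs.mp h'
          obtain ⟨c', rfl⟩ := hdq
          have hc'0 : c' ≠ 0 := by rintro rfl; simp at hc0
          have hx1 : (q : ℤ) • (c' • x) ∈ LinearMap.range T.mulVecLin := by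
            rw [smul_smul]; exact hx
          have hx2 := pstep q hqp _ hx1
          have hlt : c'.natAbs < n := by
            have he : q * c'.natAbs = n := by
              rw [← hcn, Int.natAbs_mul, Int.natAbs_natCast]
            have ha1 : 1 ≤ c'.natAbs := Nat.pos_of_ne_zero (fun h => hc'0 (Int.natAbs_eq_zero.mp h))
            have h2a : 2 * c'.natAbs ≤ q * c'.natAbs := Nat.mul_le_mul_right _ hqp.two_le
            omega
          exact ih c'.natAbs hlt c' rfl hc'0 x hx2
    intro c hc0
    exact this c.natAbs c rfl hc0
  -- the cokernel is torsion free, hence free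
  haveI : NoZeroSMulDivisors ℤ ((Fin k → ℤ) ⧸ LinearMap.range T.mulVecLin) := by
    refine ⟨fun {c x} h => ?_⟩
    rcases eq_or_ne c 0 with rfl | hc0
    · exact Or.inl rfl
    right
    obtain ⟨x', rfl⟩ := Submodule.Quotient.mk_surjective _ x
    rw [← Submodule.Quotient.mk_smul, Submodule.Quotient.mk_eq_zero] at h
    rw [Submodule.Quotient.mk_eq_zero]
    exact sat c hc0 x' h
  set φ : ↥(LinearMap.ker T.mulVecLin) →ₗ[ℤ] ((Fin k → ℤ) ⧸ LinearMap.range T.mulVecLin) :=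
    (LinearMap.range T.mulVecLin).mkQ.comp (LinearMap.ker T.mulVecLin).subtype with hφ
  have hker : (LinearMap.range T.mulVecLin).comap (LinearMap.ker T.mulVecLin).subtype
      = LinearMap.ker φ := by
    rw [hφ, LinearMap.ker_comp, Submodule.ker_mkQ]
  show Module.Free ℤ
    (↥(LinearMap.ker T.mulVecLin) ⧸
      (LinearMap.range T.mulVecLin).comap (LinearMap.ker T.mulVecLin).subtype)
  rw [hker]
  exact Module.Free.of_equiv φ.quotKerEquivRange.symm

end PartB

/-- (Chain-level matrix form of the converse direction of
Corollary 3 / Theorem 2 of the paper.)  Let `B` be a strictly upper triangular integer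
matrix with `B * B = 0`.  Suppose there is a set `S` such that the support of any
partial-matching form of `B` over `ℚ`, and over `ZMod p` for every prime `p`, equals
`S`.  Then for all `0 ≤ m < n ≤ N` the homology `ker B_{(m,n]} ⧸ range B_{(m,n]}` is a
free `ℤ`-module. -/
theorem free_homology_of_support_field_independent {N : ℕ}
    (B : Matrix (Fin N) (Fin N) ℤ)
    (hB : IsStrictlyUpperTriangular B) (hBB : B * B = 0)
    (S : Set (Fin N × Fin N))
    (hQ : ∀ U : Matrix (Fin N) (Fin N) ℚ,
      IsUnit U → IsUpperTriangularMat U →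
      IsStrictlyUpperTriangular (U⁻¹ * B.map (Int.cast : ℤ → ℚ) * U) →
      IsPartialMatching (U⁻¹ * B.map (Int.cast : ℤ → ℚ) * U) →
      {p : Fin N × Fin N | (U⁻¹ * B.map (Int.cast : ℤ → ℚ) * U) p.1 p.2 ≠ 0} = S)
    (hZmod : ∀ (p : ℕ) [Fact p.Prime], ∀ U : Matrix (Fin N) (Fin N) (ZMod p),
      IsUnit U → IsUpperTriangularMat U →
      IsStrictlyUpperTriangular (U⁻¹ * B.map (Int.cast : ℤ → ZMod p) * U) →
      IsPartialMatching (U⁻¹ * B.map (Int.cast : ℤ → ZMod p) * U) →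
      {q : Fin N × Fin N | (U⁻¹ * B.map (Int.cast : ℤ → ZMod p) * U) q.1 q.2 ≠ 0} = S) :
    ∀ m n : ℕ, m < n → ∀ hn : n ≤ N,
      Module.Free ℤ (matrixHomology (intervalSubmatrix B m n hn)) := by
  intro m n hmn hn
  apply free_of_rank_eq
  intro p hp
  haveI : Fact p.Prime := ⟨hp⟩
  -- strict upper triangularity and square-zero over each field
  have hcast : ∀ (K : Type) [Field K],
      IsStrictlyUpperTriangular (B.map (Int.cast : ℤ → K)) ∧
      (B.map (Int.cast : ℤ → K)) * (B.map (Int.cast : ℤ → K)) = 0 := by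
    intro K _
    constructor
    · intro i j h
      rw [Matrix.map_apply, hB i j h, Int.cast_zero]
    · have h1 : (B.map (Int.cast : ℤ → K)) = B.map ⇑(Int.castRingHom K) := rfl
      rw [h1, ← Matrix.map_mul, hBB]
      ext i j
      simp
  obtain ⟨hQs, hQ2⟩ := hcast ℚ
  obtain ⟨hPs, hP2⟩ := hcast (ZMod p)
  have hrQ := PMForm.rank_ivl_eq_cnt (B.map (Int.cast : ℤ → ℚ)) hQs hQ2 S hQ m n hn
  have hrP := PMForm.rank_ivl_eq_cnt (B.map (Int.cast : ℤ → ZMod p)) hPs hP2 S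
    (hZmod p) m n hn
  have eQ : (intervalSubmatrix B m n hn).map (Int.cast : ℤ → ℚ)
      = PMForm.ivl (B.map (Int.cast : ℤ → ℚ)) m n hn := rfl
  have eP : (intervalSubmatrix B m n hn).map (Int.cast : ℤ → ZMod p)
      = PMForm.ivl (B.map (Int.cast : ℤ → ZMod p)) m n hn := rfl
  rw [eQ, eP, hrQ, hrP]
end
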